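/- arXiv:2310.18873 — 11 statements merged into one kernel-verified Lean document; each statement's English description precedes it below -/
import Mathlib

section
/- For any finite coloring of the positive integers, there exists an injective sequence x : ℕ → ℕ such that all finite sums of distinct terms of x (i.e., the set FS(x)) are contained in a single color class (Hindman's theorem, additive form). -/
open scoped BigOperators

def FS (x : ℕ → ℕ) : Set ℕ :=
  {n | ∃ H : Finset ℕ, H.Nonempty ∧ n = ∑ t ∈ H, x t}

def FP (x : ℕ → ℕ) : Set ℕ :=
  {n | ∃ H : Finset ℕ, H.Nonempty ∧ n = ∏ t ∈ H, x t}

def uadd (p q : Ultrafilter ℕ) : Ultrafilter ℕ := p.bind fun a => q.map fun b => a + b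

def umul (p q : Ultrafilter ℕ) : Ultrafilter ℕ := p.bind fun a => q.map fun b => a * b

def AddIdem (p : Ultrafilter ℕ) : Prop := uadd p p = p

def MulIdem (p : Ultrafilter ℕ) : Prop := umul p p = p

def AIPstar (A : Set ℕ) : Prop := ∀ x : ℕ → ℕ, (A ∩ FS x).Nonempty

def MIPstar (A : Set ℕ) : Prop :=
  ∀ x : ℕ → ℕ, Function.Injective x → (∀ n, 2 ≤ x n) → (A ∩ FP x).Nonempty

def EXP1 (x : ℕ → ℕ) : Set ℕ :=
  {n | ∃ l : List ℕ, l ≠ [] ∧ l.Chain' (· < ·) ∧ n = l.foldl (fun a i => x i ^ a) 1}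

def EXP2 (x : ℕ → ℕ) : Set ℕ :=
  {n | ∃ (i : ℕ) (l : List ℕ), (i :: l).Chain' (· < ·) ∧ n = x i ^ (l.map x).prod}

def DynMIPstar (C : Set ℕ) : Prop :=
  ∃ (X : Type) (_ : MeasurableSpace X) (μ : MeasureTheory.Measure X),
    MeasureTheory.IsProbabilityMeasure μ ∧
    ∃ T : ℕ → X → X,
      (∀ s, MeasureTheory.MeasurePreserving (T s) μ μ) ∧
      (∀ s t, T (s * t) = T s ∘ T t) ∧
      ∃ A : Set X, MeasurableSet A ∧ 0 < μ A ∧ {s | 0 < μ (A ∩ T s ⁻¹' A)} ⊆ C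

lemma pos_of_mem_FS {a : Stream' ℕ} (ha : ∀ n, 0 < a.get n) {m : ℕ}
    (hm : m ∈ Hindman.FS a) : 0 < m := by
  induction hm with
  | head' a => exact ha 0
  | tail' a m h ih => exact ih fun n => ha (n + 1)
  | cons' a m h ih => exact Nat.lt_of_lt_of_le (ha 0) (Nat.le_add_right _ _)

theorem stmt0 (k : ℕ) (c : ℕ → Fin k) :
    ∃ x : ℕ → ℕ, Function.Injective x ∧ ∃ i : Fin k, ∀ n ∈ FS x, c n = i := by
  classical
  rcases Nat.eq_zero_or_pos k with hk | hk
  · subst hk; exact (c 0).elim0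
  set a : Stream' ℕ := fun n => n + 1 with ha
  have hapos : ∀ n, 0 < a.get n := fun n => Nat.succ_pos n
  obtain ⟨s, hs, b, hb⟩ := Hindman.FS_partition_regular a
      ((fun i : Fin k => c ⁻¹' {i} ∩ {n | 0 < n}) '' Set.univ)
      (Set.Finite.image _ Set.finite_univ)
      (by
        intro m hm
        exact ⟨c ⁻¹' {c m} ∩ {n | 0 < n}, ⟨c m, Set.mem_univ _, rfl⟩,
          rfl, pos_of_mem_FS hapos hm⟩)
  obtain ⟨i, -, rfl⟩ := hs
  have hbpos : ∀ n, 0 < b.get n := fun n => (hb (Hindman.FS.singleton b n)).2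
  -- blocks
  set G : ℕ → ℕ × ℕ := fun n => Nat.rec (0, 1)
    (fun _ p => (p.2, p.2 + (∑ t ∈ Finset.Ico p.1 p.2, b.get t) + 1)) n with hG
  set x : ℕ → ℕ := fun n => ∑ t ∈ Finset.Ico (G n).1 (G n).2, b.get t with hx
  have hGsucc : ∀ n, G (n + 1) = ((G n).2, (G n).2 + x n + 1) := fun n => rfl
  have hblock : ∀ n, (G n).1 < (G n).2 := by
    intro n
    cases n with
    | zero => exact Nat.zero_lt_one
    | succ n => rw [hGsucc]; exact Nat.lt_succ_of_le (Nat.le_add_right _ _)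
  have hmono : ∀ {m n : ℕ}, m < n → (G m).2 ≤ (G n).1 := by
    intro m n h
    induction n with
    | zero => omega
    | succ n ih =>
      rw [hGsucc]
      rcases Nat.lt_or_ge m n with h' | h'
      · exact le_trans (ih h') (le_of_lt (hblock n))
      · have : m = n := by omega
        subst this; rfl
  have hcard : ∀ n, x n + 1 ≤ x (n + 1) := by
    intro n
    have h1 : (Finset.Ico (G (n+1)).1 (G (n+1)).2).card = x n + 1 := by
      rw [hGsucc, Nat.card_Ico]; omega
    calc x n + 1 = (Finset.Ico (G (n+1)).1 (G (n+1)).2).card • 1 := by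
          rw [h1, smul_eq_mul, mul_one]
      _ ≤ ∑ t ∈ Finset.Ico (G (n+1)).1 (G (n+1)).2, b.get t :=
          Finset.card_nsmul_le_sum _ _ _ (fun t _ => hbpos t)
  have hxmono : StrictMono x := strictMono_nat_of_lt_succ fun n => by
    have := hcard n; omega
  refine ⟨x, hxmono.injective, i, ?_⟩
  rintro m ⟨H, hHne, rfl⟩
  have hdisj : (↑H : Set ℕ).PairwiseDisjoint
      (fun n => Finset.Ico (G n).1 (G n).2) := by
    rintro p - q - hpq
    rcases Nat.lt_or_ge p q with h | h
    · simp only [Function.onFun, Finset.disjoint_left]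
      intro t ht ht'
      rw [Finset.mem_Ico] at ht ht'
      have := hmono h; omega
    · have h' : q < p := by omega
      simp only [Function.onFun, Finset.disjoint_left]
      intro t ht ht'
      rw [Finset.mem_Ico] at ht ht'
      have := hmono h'; omega
  have hsum : ∑ n ∈ H, x n = ∑ t ∈ H.biUnion (fun n => Finset.Ico (G n).1 (G n).2), b.get t :=
    (Finset.sum_biUnion hdisj).symm
  have hne : (H.biUnion (fun n => Finset.Ico (G n).1 (G n).2)).Nonempty := by
    obtain ⟨n, hn⟩ := hHne
    exact ⟨(G n).1, Finset.mem_biUnion.mpr ⟨n, hn, Finset.mem_Ico.mpr ⟨le_refl _, hblock n⟩⟩⟩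
  have hmem : (∑ n ∈ H, x n) ∈ Hindman.FS b := by
    rw [hsum]; exact Hindman.FS.finset_sum b _ hne
  exact (hb hmem).1
end

section
/- For any finite coloring of the positive integers, there exists an injective sequence x : ℕ → ℕ (with all x_n ≥ 2) such that all finite products of distinct terms of x (i.e., the set FP(x)) are monochromatic. -/
open scoped BigOperators

private lemma FS_pos : ∀ (a : Stream' ℕ) (m : ℕ), m ∈ Hindman.FS a → (∀ i, 1 ≤ a.get i) → 1 ≤ m := by
  intro a m hm
  induction hm with
  | head' a => intro ha; exact ha 0
  | tail' a m h ih => intro ha; exact ih fun i => ha (i + 1)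
  | cons' a m h ih => intro ha; exact le_add_right (ha 0)

theorem stmt1 (k : ℕ) (c : ℕ → Fin k) :
    ∃ x : ℕ → ℕ, Function.Injective x ∧ (∀ n, 2 ≤ x n) ∧
      ∃ i : Fin k, ∀ n ∈ FP x, c n = i := by
  simp only [FP, Set.mem_setOf_eq]
  -- partition of FS(const 1) by color of 2^n
  obtain ⟨s, hs, b, hb⟩ := Hindman.FS_partition_regular (Stream'.const 1)
    (Set.range fun i : Fin k => {n | 1 ≤ n ∧ c (2 ^ n) = i}) (Set.finite_range _)
    (by
      intro m hm
      have h1 : 1 ≤ m := FS_pos _ m hm fun i => le_refl 1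
      exact ⟨_, ⟨c (2 ^ m), rfl⟩, h1, rfl⟩)
  obtain ⟨i0, rfl⟩ := hs
  -- each term of b is positive
  have hbpos : ∀ n, 1 ≤ b.get n := fun n => (hb (Hindman.FS.singleton b n)).1
  set g : ℕ → ℕ := fun n => b.get n with hg
  set P : ℕ → ℕ := fun m => ∑ j ∈ Finset.range m, g j with hP
  -- block boundaries
  let T : ℕ → ℕ := fun n => Nat.rec 0 (fun _ t => P t + t + 1) n
  have hT : ∀ n, T (n + 1) = P (T n) + T n + 1 := fun n => rfl
  have hTmono : StrictMono T := strictMono_nat_of_lt_succ fun n => by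
    rw [hT]; omega
  set y : ℕ → ℕ := fun n => ∑ j ∈ Finset.Ico (T n) (T (n + 1)), g j with hy
  have hylb : ∀ n, P (T n) + 1 ≤ y n := by
    intro n
    calc P (T n) + 1 = (Finset.Ico (T n) (T (n + 1))).card := by
          rw [Nat.card_Ico, hT]; omega
      _ ≤ ∑ j ∈ Finset.Ico (T n) (T (n + 1)), g j :=
          Finset.card_nsmul_le_sum _ _ 1 (fun j _ => hbpos j) |>.trans_eq' (by simp)
  have hyub : ∀ n, y n ≤ P (T (n + 1)) := by
    intro n
    exact Finset.sum_le_sum_of_subset (by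
      intro j hj
      simp only [Finset.mem_Ico, Finset.mem_range] at *
      omega)
  have hymono : StrictMono y := strictMono_nat_of_lt_succ fun n =>
    lt_of_le_of_lt (hyub n) (lt_of_lt_of_le (Nat.lt_succ_self _) (hylb (n + 1)))
  have hypos : ∀ n, 1 ≤ y n := fun n => le_trans (by omega) (hylb n)
  refine ⟨fun n => 2 ^ y n, ?_, ?_, i0, ?_⟩
  · intro m n h
    exact hymono.injective (Nat.pow_right_injective (le_refl 2) h)
  · intro n
    calc (2:ℕ) = 2 ^ 1 := rfl
      _ ≤ 2 ^ y n := Nat.pow_le_pow_right (by norm_num) (hypos n)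
  · rintro n ⟨H, hH, rfl⟩
    rw [Finset.prod_pow_eq_pow_sum]
    have hsum : (∑ t ∈ H, y t) ∈ Hindman.FS b := by
      have hdisj : (H : Set ℕ).PairwiseDisjoint fun t => Finset.Ico (T t) (T (t + 1)) := by
        intro s hs t ht hst
        apply Finset.disjoint_left.mpr
        intro j hjs hjt
        simp only [Finset.mem_Ico] at hjs hjt
        rcases lt_or_gt_of_ne hst with h | h
        · exact absurd hjt.1 (not_le.mpr (lt_of_lt_of_le hjs.2 (hTmono.le_iff_le.mpr h)))
        · exact absurd hjs.1 (not_le.mpr (lt_of_lt_of_le hjt.2 (hTmono.le_iff_le.mpr h)))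
      have : ∑ t ∈ H, y t = ∑ j ∈ H.biUnion (fun t => Finset.Ico (T t) (T (t + 1))), g j :=
        (Finset.sum_biUnion hdisj).symm
      rw [this]
      apply Hindman.FS.finset_sum
      obtain ⟨t, ht⟩ := hH
      refine ⟨T t, Finset.mem_biUnion.mpr ⟨t, ht, ?_⟩⟩
      simp only [Finset.mem_Ico, hT]; omega
    exact (hb hsum).2
end

section
/- A subset A of ℕ (positive integers) is an additive IP set (i.e., contains FS of some sequence) if and only if there exists an idempotent ultrafilter p in (βℕ, +) with A ∈ p. -/
open scoped BigOperators

attribute [local instance] Ultrafilter.add Ultrafilter.addSemigroup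

lemma uadd_eq (p q : Ultrafilter ℕ) : uadd p q = p + q := by
  refine Ultrafilter.coe_inj.mp (Filter.ext fun s => ?_)
  rw [show ((p + q : Ultrafilter ℕ) : Filter ℕ) = _ from rfl]
  constructor
  · intro h
    exact (Ultrafilter.eventually_add p q (· ∈ s)).mpr h
  · intro h
    exact (Ultrafilter.eventually_add p q (· ∈ s)).mp h

lemma hindman_FS_sub (a : Stream' ℕ) : Hindman.FS a ⊆ FS (fun n => a.get n) := by
  intro n hn
  induction hn with
  | head' a => exact ⟨{0}, ⟨0, Finset.mem_singleton_self 0⟩, by simp [Stream'.head]⟩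
  | tail' a m h ih =>
      obtain ⟨H, hne, rfl⟩ := ih
      refine ⟨H.image (· + 1), hne.image _, ?_⟩
      rw [Finset.sum_image (by intro x _ y _ h; simpa using h)]
      simp [Stream'.tail, Stream'.get]
  | cons' a m h ih =>
      obtain ⟨H, hne, rfl⟩ := ih
      refine ⟨insert 0 (H.image (· + 1)), Finset.insert_nonempty _ _, ?_⟩
      rw [Finset.sum_insert (by simp), Finset.sum_image (by intro x _ y _ h; simpa using h)]
      simp [Stream'.head, Stream'.tail, Stream'.get]

theorem stmt2 (A : Set ℕ) :
    (∃ x : ℕ → ℕ, FS x ⊆ A) ↔ ∃ p : Ultrafilter ℕ, AddIdem p ∧ A ∈ p := by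
  constructor
  · rintro ⟨x, hx⟩
    obtain ⟨U, Uidem, hU⟩ := Hindman.exists_idempotent_ultrafilter_le_FS (x : Stream' ℕ)
    refine ⟨U, by rw [AddIdem, uadd_eq]; exact Uidem, ?_⟩
    exact Filter.mem_of_superset hU fun n hn => hx (hindman_FS_sub _ hn)
  · rintro ⟨p, pidem, hA⟩
    obtain ⟨a, ha⟩ := Hindman.exists_FS_of_large p (by rw [← uadd_eq]; exact pidem) A hA
    refine ⟨fun n => a.get n, ?_⟩
    rintro n ⟨H, hne, rfl⟩
    exact ha (Hindman.FS.finset_sum a H hne)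
end

section
/- The closure of the set of additive idempotent ultrafilters in βℕ is a left ideal of the multiplicative semigroup (βℕ, ·); that is, for any q ∈ βℕ and any p in the closure of E(βℕ, +), the product q · p lies in the closure of E(βℕ, +). -/
open scoped BigOperators

lemma mem_umul {q p : Ultrafilter ℕ} {s : Set ℕ} :
    s ∈ umul q p ↔ {a | {b | a * b ∈ s} ∈ p} ∈ q := Iff.rfl

lemma mem_uadd {q p : Ultrafilter ℕ} {s : Set ℕ} :
    s ∈ uadd q p ↔ {a | {b | a + b ∈ s} ∈ p} ∈ q := Iff.rfl

lemma cont_of (f : Ultrafilter ℕ → Ultrafilter ℕ)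
    (h : ∀ s : Set ℕ, ∃ t, ∀ r, s ∈ f r ↔ t ∈ r) : Continuous f := by
  apply continuous_generateFrom_iff.2
  rintro _ ⟨s, rfl⟩
  obtain ⟨t, ht⟩ := h s
  have : f ⁻¹' {u | s ∈ u} = {r | t ∈ r} := by ext r; exact ht r
  rw [this]
  exact ultrafilter_isOpen_basic t

lemma map_addIdem (n : ℕ) {p : Ultrafilter ℕ} (hp : AddIdem p) :
    AddIdem (p.map fun b => n * b) := by
  unfold AddIdem at *
  ext s
  rw [mem_uadd]
  simp only [Ultrafilter.mem_map, Set.preimage_setOf_eq]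
  rw [show (fun b => n * b) ⁻¹' s = {b | n * b ∈ s} from rfl]
  conv_rhs => rw [← hp, mem_uadd]
  simp [Set.preimage_setOf_eq, Nat.mul_add]

lemma pure_umul (n : ℕ) (p : Ultrafilter ℕ) :
    umul (pure n) p = p.map fun b => n * b := by
  ext s
  rw [mem_umul]
  rfl

theorem stmt4 (q p : Ultrafilter ℕ) (hp : p ∈ closure {r : Ultrafilter ℕ | AddIdem r}) :
    umul q p ∈ closure {r : Ultrafilter ℕ | AddIdem r} := by
  set E := {r : Ultrafilter ℕ | AddIdem r}
  have hmaps : ∀ n : ℕ, p.map (fun b => n * b) ∈ closure E := by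
    intro n
    have hc : Continuous (fun r : Ultrafilter ℕ => r.map fun b => n * b) := by
      apply cont_of
      intro s
      exact ⟨{b | n * b ∈ s}, fun r => Iff.rfl⟩
    have := map_mem_closure (t := E) hc hp (fun r hr => by simp only [E, Set.mem_setOf_eq] at hr ⊢; exact map_addIdem n hr)
    exact this
  have hc2 : Continuous (fun r : Ultrafilter ℕ => umul r p) := by
    apply cont_of
    intro s
    exact ⟨{a | {b | a * b ∈ s} ∈ p}, fun r => Iff.rfl⟩
  have hq : q ∈ closure (Set.range (pure : ℕ → Ultrafilter ℕ)) := denseRange_pure q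
  have := map_mem_closure hc2 hq (t := closure E) ?_
  · rwa [closure_closure] at this
  · rintro _ ⟨n, rfl⟩
    show umul (pure n) p ∈ closure E; rw [pure_umul]
    exact hmaps n
end

section
/- The family of additive IP* subsets of ℕ is closed under finite intersection: if A and B are both additive IP* sets, then A ∩ B is an additive IP* set. -/
open scoped BigOperators

attribute [local instance] Ultrafilter.addSemigroup

lemma mem_FS_of_hindman {a : Stream' ℕ} {m : ℕ} (h : m ∈ Hindman.FS a) :
    ∃ H : Finset ℕ, H.Nonempty ∧ m = ∑ t ∈ H, a.get t := by
  induction h with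
  | head' a => exact ⟨{0}, ⟨0, by simp⟩, by simp [Stream'.head]⟩
  | tail' a m h ih =>
    obtain ⟨H, hne, hsum⟩ := ih
    refine ⟨H.image (· + 1), hne.image _, ?_⟩
    rw [Finset.sum_image (by intro x _ y _ h; simpa using h)]
    simpa [Stream'.tail, Stream'.get] using hsum
  | cons' a m h ih =>
    obtain ⟨H, hne, hsum⟩ := ih
    refine ⟨insert 0 (H.image (· + 1)), ⟨0, Finset.mem_insert_self _ _⟩, ?_⟩
    rw [Finset.sum_insert (by simp), Finset.sum_image (by intro x _ y _ h; simpa using h)]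
    have : a.head = a.get 0 := rfl
    rw [this, hsum]
    rfl

lemma FS_subset_hindman (a : Stream' ℕ) : FS a.get ⊆ Hindman.FS a := by
  rintro n ⟨H, hne, rfl⟩
  exact Hindman.FS.finset_sum a H hne

lemma mem_idem_of_AIPstar {A : Set ℕ} (hA : AIPstar A) (U : Ultrafilter ℕ)
    (hU : U + U = U) : A ∈ U := by
  by_contra h
  have hc : Aᶜ ∈ U := Ultrafilter.compl_mem_iff_notMem.mpr h
  obtain ⟨b, hb⟩ := Hindman.exists_FS_of_large U hU Aᶜ hc
  obtain ⟨n, hnA, hnFS⟩ := hA b.get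
  exact hb (FS_subset_hindman b hnFS) hnA

theorem stmt8 (A B : Set ℕ) (hA : AIPstar A) (hB : AIPstar B) :
    AIPstar (A ∩ B) := by
  intro x
  obtain ⟨U, hidem, haU⟩ := Hindman.exists_idempotent_ultrafilter_le_FS (x : Stream' ℕ)
  have hFS : Hindman.FS (x : Stream' ℕ) ∈ U := haU
  have hAU := mem_idem_of_AIPstar hA U hidem
  have hBU := mem_idem_of_AIPstar hB U hidem
  obtain ⟨n, hn⟩ := Ultrafilter.nonempty_of_mem (Filter.inter_mem (Filter.inter_mem hAU hBU) hFS)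
  exact ⟨n, ⟨hn.1.1, hn.1.2⟩, mem_FS_of_hindman hn.2⟩
end

section
/- Let p be a multiplicatively idempotent ultrafilter on ℕ and A ∈ p. Define A* = { x ∈ A : { y : x·y ∈ A } ∈ p }. Then A* ∈ p, and for every x ∈ A*, the set { y : x·y ∈ A* } ∈ p. -/
open scoped BigOperators

lemma mem_umul_iff {p : Ultrafilter ℕ} {S : Set ℕ} :
    S ∈ umul p p ↔ {a | {b | a * b ∈ S} ∈ p} ∈ p := by
  show S ∈ Filter.bind (↑p) (fun a => ↑(Ultrafilter.map (fun b => a * b) p)) ↔ _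
  simp only [Filter.mem_bind', Ultrafilter.mem_coe, Ultrafilter.mem_map, Set.preimage,
    Set.mem_setOf_eq]

theorem stmt10 (p : Ultrafilter ℕ) (hp : MulIdem p) (A : Set ℕ) (hA : A ∈ p) :
    {x ∈ A | {y : ℕ | x * y ∈ A} ∈ p} ∈ p ∧
      ∀ x ∈ {x ∈ A | {y : ℕ | x * y ∈ A} ∈ p},
        {y : ℕ | x * y ∈ {x ∈ A | {y : ℕ | x * y ∈ A} ∈ p}} ∈ p := by
  have key : ∀ S : Set ℕ, S ∈ p → {a | {b | a * b ∈ S} ∈ p} ∈ p := by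
    intro S hS
    have : S ∈ umul p p := by rw [hp]; exact hS
    exact mem_umul_iff.mp this
  constructor
  · exact p.toFilter.inter_mem hA (key A hA)
  · rintro x ⟨hxA, hxB⟩
    have hC : {y | {z | y * z ∈ {b | x * b ∈ A}} ∈ p} ∈ p := key _ hxB
    filter_upwards [hxB, hC] with y hy1 hy2
    refine ⟨hy1, ?_⟩
    simpa [Set.mem_setOf_eq, mul_assoc] using hy2
end

section
/- Let A ⊆ ℕ be a multiplicative IP* set. Then there exists a sequence ⟨x_n⟩ of integers ≥ 2 such that FP(⟨x_n⟩) ∪ EXP₁(⟨x_n⟩) ∪ EXP₂(⟨x_n⟩) ⊆ A, where EXP₁ consists of all exponential towers x_{i_k}^{x_{i_{k-1}}^{⋰^{x_{i_1}}}} with i_1 < ⋯ < i_k, and EXP₂ consists of all elements x_{i_1}^{x_{i_2}⋯x_{i_k}} with i_1 < ⋯ < i_k. -/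
open scoped BigOperators

section UF
open Filter Set

def uop (op : ℕ → ℕ → ℕ) (p q : Ultrafilter ℕ) : Ultrafilter ℕ :=
  p.bind fun a => q.map fun b => op a b

theorem mem_uop {op : ℕ → ℕ → ℕ} {p q : Ultrafilter ℕ} {S : Set ℕ} :
    S ∈ uop op p q ↔ {a | {b | op a b ∈ S} ∈ q} ∈ p := Iff.rfl

theorem umul_uop (p q : Ultrafilter ℕ) : umul p q = uop (· * ·) p q := rfl
theorem uadd_uop (p q : Ultrafilter ℕ) : uadd p q = uop (· + ·) p q := rfl

theorem uop_assoc {op : ℕ → ℕ → ℕ} (h : ∀ a b c, op (op a b) c = op a (op b c))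
    (p q r : Ultrafilter ℕ) : uop op (uop op p q) r = uop op p (uop op q r) := by
  apply Ultrafilter.ext; intro S
  simp only [mem_uop, Set.mem_setOf_eq, h]

theorem continuous_uop_left (op : ℕ → ℕ → ℕ) (V : Ultrafilter ℕ) :
    Continuous fun U => uop op U V :=
  ultrafilterBasis_is_basis.continuous_iff.2 <| Set.forall_mem_range.mpr fun s =>
    ultrafilter_isOpen_basic {a | {b | op a b ∈ s} ∈ V}

theorem exists_idem_uop {op : ℕ → ℕ → ℕ} (h : ∀ a b c, op (op a b) c = op a (op b c))
    {C : Set (Ultrafilter ℕ)} (hne : C.Nonempty) (hcl : IsClosed C)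
    (hmul : ∀ p ∈ C, ∀ q ∈ C, uop op p q ∈ C) : ∃ q ∈ C, uop op q q = q := by
  letI : Semigroup (Ultrafilter ℕ) := { mul := uop op, mul_assoc := uop_assoc h }
  obtain ⟨m, hm, hmm⟩ := exists_idempotent_in_compact_subsemigroup
    (fun r => continuous_uop_left op r) C hne hcl.isCompact hmul
  exact ⟨m, hm, hmm⟩

theorem uop_star {op : ℕ → ℕ → ℕ} {q : Ultrafilter ℕ} (hq : uop op q q = q) {B : Set ℕ}
    (hB : B ∈ q) : {a | {b | op a b ∈ B} ∈ q} ∈ q := by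
  rw [← hq] at hB; exact mem_uop.mp hB

end UF

section Builder
open Filter Set

noncomputable def chainBuild (step : List ℕ → ℕ) : ℕ → List ℕ
  | 0 => []
  | n + 1 => chainBuild step n ++ [step (chainBuild step n)]

theorem chainBuild_length (step : List ℕ → ℕ) (n : ℕ) : (chainBuild step n).length = n := by
  induction n with
  | zero => rfl
  | succ n ih => simp [chainBuild, ih]

theorem chainBuild_prefix (step : List ℕ → ℕ) {m n : ℕ} (h : m ≤ n) :
    (chainBuild step m) <+: (chainBuild step n) := by
  induction h with
  | refl => exact List.prefix_rfl
  | step h ih => exact ih.trans (by exact ⟨_, rfl⟩)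

noncomputable def seqOf (step : List ℕ → ℕ) (t : ℕ) : ℕ := (chainBuild step (t + 1)).getD t 1

theorem seqOf_eq (step : List ℕ → ℕ) {t n : ℕ} (h : t < n) :
    (chainBuild step n).getD t 1 = seqOf step t := by
  obtain ⟨u, hu⟩ := chainBuild_prefix step h
  rw [seqOf, ← hu, List.getD_append _ _ _ _ (by rw [chainBuild_length]; exact Nat.lt_succ_self t)]

theorem getD_concat (L : List ℕ) (y : ℕ) : (L ++ [y]).getD L.length 1 = y := by
  rw [List.getD_append_right _ _ _ _ le_rfl, Nat.sub_self]; rfl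

theorem le_foldr_max : ∀ {L : List ℕ} {a : ℕ}, a ∈ L → a ≤ L.foldr max 0
  | b :: L, a, h => by
    rcases List.mem_cons.mp h with rfl | h
    · exact le_max_left _ _
    · exact le_trans (le_foldr_max h) (le_max_right _ _)

theorem chain'_getD_lt {L : List ℕ} (hL : L.Chain' (· < ·)) {s t : ℕ} (hst : s < t)
    (ht : t < L.length) : L.getD s 1 < L.getD t 1 := by
  rw [List.getD_eq_getElem L 1 (lt_trans hst ht), List.getD_eq_getElem L 1 ht]
  exact List.pairwise_iff_getElem.mp (List.isChain_iff_pairwise.mp hL) s t _ _ hst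

theorem getD_mem {L : List ℕ} {t : ℕ} (h : t < L.length) : L.getD t 1 ∈ L := by
  rw [List.getD_eq_getElem L 1 h]; exact List.getElem_mem _

end Builder

section GG
open Filter Set

variable {q : Ultrafilter ℕ} {B : Set ℕ}

/-- partial products over a finite index set, reading values from a list -/
def prG (L : List ℕ) (H : Finset ℕ) : ℕ := ∏ t ∈ H, L.getD t 1

def InvG (q : Ultrafilter ℕ) (B : Set ℕ) (L : List ℕ) : Prop :=
  L.Chain' (· < ·) ∧
  ∀ H ∈ (Finset.range L.length).powerset,
    ({z | prG L H * z ∈ B} ∈ q ∧ (H.Nonempty → prG L H ∈ B))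

def NextG (q : Ultrafilter ℕ) (B : Set ℕ) (L : List ℕ) : Set ℕ :=
  {y | ∀ a ∈ L, a < y} ∩
  ⋂ H ∈ (Finset.range L.length).powerset,
      ({y | prG L H * y ∈ B} ∩ {y | {z | prG L H * (y * z) ∈ B} ∈ q})

theorem NextG_mem (hq : uop (· * ·) q q = q) (hcb : ∀ m : ℕ, {k | m ≤ k} ∈ q)
    {L : List ℕ} (hInv : InvG q B L) : NextG q B L ∈ q := by
  refine Filter.inter_mem ?_ ?_
  · refine Filter.mem_of_superset (hcb (L.foldr max 0 + 1)) ?_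
    intro y hy a ha
    exact lt_of_le_of_lt (le_foldr_max ha) hy
  · rw [Filter.biInter_finset_mem]
    intro H hH
    obtain ⟨h1, -⟩ := hInv.2 H hH
    refine Filter.inter_mem h1 ?_
    exact uop_star hq h1

theorem prG_append {L : List ℕ} {y : ℕ} {H : Finset ℕ}
    (hH : H ∈ (Finset.range L.length).powerset) : prG (L ++ [y]) H = prG L H := by
  refine Finset.prod_congr rfl fun t ht => ?_
  exact List.getD_append _ _ _ _ (Finset.mem_range.mp (Finset.mem_powerset.mp hH ht))

theorem InvG_step (hq : uop (· * ·) q q = q) {L : List ℕ} (hInv : InvG q B L)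
    {y : ℕ} (hy : y ∈ NextG q B L) : InvG q B (L ++ [y]) := by
  obtain ⟨hbd, hrest⟩ := hy
  have hrest' : ∀ H ∈ (Finset.range L.length).powerset,
      (prG L H * y ∈ B ∧ {z | prG L H * (y * z) ∈ B} ∈ q) := by
    intro H hH
    have := Set.mem_iInter₂.mp hrest H hH
    exact ⟨this.1, this.2⟩
  constructor
  · show List.IsChain _ (L ++ [y]); rw [List.isChain_append]
    refine ⟨hInv.1, List.isChain_singleton y, ?_⟩
    intro x hx z hz
    simp only [List.head?_cons, Option.mem_def, Option.some.injEq] at hz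
    subst hz
    exact hbd x (List.mem_of_mem_getLast? hx)
  · intro H hH
    have hlen : (L ++ [y]).length = L.length + 1 := by simp
    rw [hlen] at hH
    by_cases hn : L.length ∈ H
    · -- new element participates
      set H' := H.erase L.length with hH'
      have hsub : H' ∈ (Finset.range L.length).powerset := by
        rw [Finset.mem_powerset]
        intro t ht
        have h1 := Finset.mem_powerset.mp hH (Finset.erase_subset _ _ ht)
        have h2 := Finset.ne_of_mem_erase ht
        rw [Finset.mem_range] at h1 ⊢
        omega
      have hins : insert L.length H' = H := Finset.insert_erase hn
      have hprod : prG (L ++ [y]) H = y * prG L H' := by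
        rw [← hins, prG, Finset.prod_insert (Finset.notMem_erase _ _), getD_concat]
        congr 1
        exact prG_append hsub
      obtain ⟨hB1, hq1⟩ := hrest' H' hsub
      refine ⟨?_, fun _ => ?_⟩
      · have : {z | prG (L ++ [y]) H * z ∈ B} = {z | prG L H' * (y * z) ∈ B} := by
          ext z
          simp only [Set.mem_setOf_eq, hprod]
          rw [show y * prG L H' * z = prG L H' * (y * z) by ring]
        rw [this]; exact hq1
      · rw [hprod, mul_comm]; exact hB1
    · -- old set
      have hsub : H ∈ (Finset.range L.length).powerset := by
        rw [Finset.mem_powerset]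
        intro t ht
        have h1 := Finset.mem_range.mp (Finset.mem_powerset.mp hH ht)
        have : t ≠ L.length := fun h => hn (h ▸ ht)
        rw [Finset.mem_range]
        omega
      rw [prG_append hsub]
      exact hInv.2 H hsub

theorem GGmul (hq : uop (· * ·) q q = q) (hcb : ∀ m : ℕ, {k | m ≤ k} ∈ q)
    (hB : B ∈ q) :
    ∃ y : ℕ → ℕ, StrictMono y ∧ ∀ H : Finset ℕ, H.Nonempty → (∏ t ∈ H, y t) ∈ B := by
  classical
  set step : List ℕ → ℕ := fun L =>
    if h : (NextG q B L).Nonempty then h.choose else 0 with hstep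
  have hInvAll : ∀ n, InvG q B (chainBuild step n) := by
    intro n
    induction n with
    | zero =>
      constructor
      · exact List.isChain_nil
      · intro H hH
        have : H = ∅ := by
          rw [Finset.mem_powerset] at hH
          simpa using Finset.subset_empty.mp (by simpa [chainBuild] using hH)
        subst this
        constructor
        · have : {z | prG [] ∅ * z ∈ B} = B := by ext z; simp [prG]
          rw [show chainBuild step 0 = [] from rfl, this]; exact hB
        · intro h; exact absurd rfl h.ne_empty
    | succ n ih =>
      have hne : (NextG q B (chainBuild step n)).Nonempty :=
        Ultrafilter.nonempty_of_mem (NextG_mem hq hcb ih)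
      have hmem : step (chainBuild step n) ∈ NextG q B (chainBuild step n) := by
        rw [hstep] at hne ⊢; simp only [dif_pos hne]; exact hne.choose_spec
      exact InvG_step hq ih hmem
  refine ⟨seqOf step, ?_, ?_⟩
  · intro s t hst
    have h1 := chain'_getD_lt (hInvAll (t + 1)).1 hst (by rw [chainBuild_length]; omega)
    rwa [seqOf_eq step (Nat.lt_succ_self t), seqOf_eq step (by omega : s < t + 1)] at h1
  · intro H hHne
    set n := H.sup id + 1 with hn
    have hHsub : H ∈ (Finset.range n).powerset := by
      rw [Finset.mem_powerset]
      intro t ht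
      rw [Finset.mem_range, hn]
      exact Nat.lt_succ_of_le (Finset.le_sup (f := id) ht)
    have := (hInvAll n).2 H (by rwa [chainBuild_length])
    have heq : prG (chainBuild step n) H = ∏ t ∈ H, seqOf step t := by
      refine Finset.prod_congr rfl fun t ht => ?_
      exact seqOf_eq step (Finset.mem_range.mp (Finset.mem_powerset.mp hHsub ht))
    rw [← heq]
    exact this.2 hHne

end GG

section GGadd
open Filter Set

def psG (L : List ℕ) (H : Finset ℕ) : ℕ := ∑ t ∈ H, L.getD t 1

def InvGA (q : Ultrafilter ℕ) (B : Set ℕ) (L : List ℕ) : Prop :=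
  L.Chain' (· < ·) ∧
  ∀ H ∈ (Finset.range L.length).powerset,
    ({z | psG L H + z ∈ B} ∈ q ∧ (H.Nonempty → psG L H ∈ B))

def NextGA (q : Ultrafilter ℕ) (B : Set ℕ) (L : List ℕ) : Set ℕ :=
  {y | ∀ a ∈ L, a < y} ∩
  ⋂ H ∈ (Finset.range L.length).powerset,
      ({y | psG L H + y ∈ B} ∩ {y | {z | psG L H + (y + z) ∈ B} ∈ q})

theorem NextGA_mem {q : Ultrafilter ℕ} {B : Set ℕ} (hq : uop (· + ·) q q = q)
    (hcb : ∀ m : ℕ, {k | m ≤ k} ∈ q)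
    {L : List ℕ} (hInv : InvGA q B L) : NextGA q B L ∈ q := by
  refine Filter.inter_mem ?_ ?_
  · refine Filter.mem_of_superset (hcb (L.foldr max 0 + 1)) ?_
    intro y hy a ha
    exact lt_of_le_of_lt (le_foldr_max ha) hy
  · rw [Filter.biInter_finset_mem]
    intro H hH
    obtain ⟨h1, -⟩ := hInv.2 H hH
    exact Filter.inter_mem h1 (uop_star hq h1)

theorem psG_append {L : List ℕ} {y : ℕ} {H : Finset ℕ}
    (hH : H ∈ (Finset.range L.length).powerset) : psG (L ++ [y]) H = psG L H := by
  refine Finset.sum_congr rfl fun t ht => ?_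
  exact List.getD_append _ _ _ _ (Finset.mem_range.mp (Finset.mem_powerset.mp hH ht))

theorem InvGA_step {q : Ultrafilter ℕ} {B : Set ℕ} {L : List ℕ} (hInv : InvGA q B L)
    {y : ℕ} (hy : y ∈ NextGA q B L) : InvGA q B (L ++ [y]) := by
  obtain ⟨hbd, hrest⟩ := hy
  have hrest' : ∀ H ∈ (Finset.range L.length).powerset,
      (psG L H + y ∈ B ∧ {z | psG L H + (y + z) ∈ B} ∈ q) := by
    intro H hH
    have := Set.mem_iInter₂.mp hrest H hH
    exact ⟨this.1, this.2⟩
  constructor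
  · show List.IsChain _ (L ++ [y]); rw [List.isChain_append]
    refine ⟨hInv.1, List.isChain_singleton y, ?_⟩
    intro x hx z hz
    simp only [List.head?_cons, Option.mem_def, Option.some.injEq] at hz
    subst hz
    exact hbd x (List.mem_of_mem_getLast? hx)
  · intro H hH
    have hlen : (L ++ [y]).length = L.length + 1 := by simp
    rw [hlen] at hH
    by_cases hn : L.length ∈ H
    · have hsub : H.erase L.length ∈ (Finset.range L.length).powerset := by
        rw [Finset.mem_powerset]
        intro t ht
        have h1 := Finset.mem_range.mp
          (Finset.mem_powerset.mp hH (Finset.erase_subset _ _ ht))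
        have h2 := Finset.ne_of_mem_erase ht
        rw [Finset.mem_range]; omega
      have hins : H = insert L.length (H.erase L.length) := (Finset.insert_erase hn).symm
      have hprod : psG (L ++ [y]) H = y + psG L (H.erase L.length) := by
        generalize hE : H.erase L.length = E at hsub hins ⊢
        rw [hins, psG, Finset.sum_insert (by rw [← hE]; exact Finset.notMem_erase _ _)]
        have h1 : (L ++ [y]).getD L.length 1 = y := by
          rw [List.getD_append_right _ _ _ _ le_rfl, Nat.sub_self]; rfl
        rw [h1]
        congr 1
        exact psG_append hsub
      obtain ⟨hB1, hq1⟩ := hrest' _ hsub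
      refine ⟨?_, fun _ => ?_⟩
      · have : {z | psG (L ++ [y]) H + z ∈ B} = {z | psG L (H.erase L.length) + (y + z) ∈ B} := by
          ext z
          simp only [Set.mem_setOf_eq, hprod]
          rw [show y + psG L (H.erase L.length) + z = psG L (H.erase L.length) + (y + z) by ring]
        rw [this]; exact hq1
      · rw [hprod, Nat.add_comm]; exact hB1
    · have hsub : H ∈ (Finset.range L.length).powerset := by
        rw [Finset.mem_powerset]
        intro t ht
        have h1 := Finset.mem_range.mp (Finset.mem_powerset.mp hH ht)
        have : t ≠ L.length := fun h => hn (h ▸ ht)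
        rw [Finset.mem_range]; omega
      rw [psG_append hsub]
      exact hInv.2 H hsub

theorem GGadd {q : Ultrafilter ℕ} {B : Set ℕ} (hq : uop (· + ·) q q = q)
    (hcb : ∀ m : ℕ, {k | m ≤ k} ∈ q) (hB : B ∈ q) :
    ∃ y : ℕ → ℕ, StrictMono y ∧ ∀ H : Finset ℕ, H.Nonempty → (∑ t ∈ H, y t) ∈ B := by
  classical
  set step : List ℕ → ℕ := fun L =>
    if h : (NextGA q B L).Nonempty then h.choose else 0 with hstep
  have hInvAll : ∀ n, InvGA q B (chainBuild step n) := by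
    intro n
    induction n with
    | zero =>
      constructor
      · exact List.isChain_nil
      · intro H hH
        have : H = ∅ := by
          rw [Finset.mem_powerset] at hH
          simpa using Finset.subset_empty.mp (by simpa [chainBuild] using hH)
        subst this
        constructor
        · have : {z | psG [] ∅ + z ∈ B} = B := by ext z; simp [psG]
          rw [show chainBuild step 0 = [] from rfl, this]; exact hB
        · intro h; exact absurd rfl h.ne_empty
    | succ n ih =>
      have hne : (NextGA q B (chainBuild step n)).Nonempty :=
        Ultrafilter.nonempty_of_mem (NextGA_mem hq hcb ih)
      have hmem : step (chainBuild step n) ∈ NextGA q B (chainBuild step n) := by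
        rw [hstep] at hne ⊢; simp only [dif_pos hne]; exact hne.choose_spec
      exact InvGA_step ih hmem
  refine ⟨seqOf step, ?_, ?_⟩
  · intro s t hst
    have h1 := chain'_getD_lt (hInvAll (t + 1)).1 hst (by rw [chainBuild_length]; omega)
    rwa [seqOf_eq step (Nat.lt_succ_self t), seqOf_eq step (by omega : s < t + 1)] at h1
  · intro H hHne
    set n := H.sup id + 1 with hn
    have hHsub : H ∈ (Finset.range n).powerset := by
      rw [Finset.mem_powerset]
      intro t ht
      rw [Finset.mem_range, hn]
      exact Nat.lt_succ_of_le (Finset.le_sup (f := id) ht)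
    have := (hInvAll n).2 H (by rwa [chainBuild_length])
    have heq : psG (chainBuild step n) H = ∑ t ∈ H, seqOf step t := by
      refine Finset.sum_congr rfl fun t ht => ?_
      exact seqOf_eq step (Finset.mem_range.mp (Finset.mem_powerset.mp hHsub ht))
    rw [← heq]
    exact this.2 hHne

end GGadd

section Good
open Filter Set

def AddIP (B : Set ℕ) : Prop :=
  ∃ w : ℕ → ℕ, StrictMono w ∧ (∀ t, 1 ≤ w t) ∧
    ∀ H : Finset ℕ, H.Nonempty → (∑ t ∈ H, w t) ∈ B

theorem exists_good_q :
    ∃ q : Ultrafilter ℕ, (∀ m : ℕ, {k | m ≤ k} ∈ q) ∧ (∀ B ∈ q, AddIP B) ∧ umul q q = q := by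
  classical
  set C₀ : Set (Ultrafilter ℕ) := {q | ∀ m : ℕ, {k | m ≤ k} ∈ q} with hC₀
  have hC₀cl : IsClosed C₀ := by
    have : C₀ = ⋂ m : ℕ, {q : Ultrafilter ℕ | {k | m ≤ k} ∈ q} := by
      ext q; simp [hC₀]
    rw [this]
    exact isClosed_iInter fun m => ultrafilter_isClosed_basic _
  have hC₀ne : C₀.Nonempty := by
    refine ⟨Ultrafilter.of Filter.atTop, fun m => ?_⟩
    exact Filter.le_def.mp (Ultrafilter.of_le _) _ (Filter.mem_atTop m)
  -- additive idempotent with cobounded sets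
  obtain ⟨r, hrC, hridem⟩ := exists_idem_uop (op := (· + ·)) (fun a b c => add_assoc a b c)
    hC₀ne hC₀cl (by
      intro p hp q hq
      intro m
      rw [mem_uop]
      refine Filter.mem_of_superset Filter.univ_mem ?_
      intro a _
      refine Filter.mem_of_superset (hq m) ?_
      intro b hb
      simp only [Set.mem_setOf_eq] at hb ⊢
      omega)
  have hrIP : ∀ B ∈ r, AddIP B := by
    intro B hB
    obtain ⟨w, hw1, hw2⟩ := GGadd hridem hrC
      (Filter.inter_mem hB (hrC 1) : B ∩ {k | 1 ≤ k} ∈ r)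
    refine ⟨w, hw1, fun t => ?_, fun H hH => ?_⟩
    · have := hw2 {t} (Finset.singleton_nonempty t)
      simpa using this.2
    · exact (hw2 H hH).1
  -- now the multiplicative idempotent in the closed subsemigroup
  set S : Set (Ultrafilter ℕ) := C₀ ∩ {q | ∀ B ∈ q, AddIP B} with hS
  have hScl : IsClosed S := by
    refine IsClosed.inter hC₀cl ?_
    have : {q : Ultrafilter ℕ | ∀ B ∈ q, AddIP B} =
        ⋂ B ∈ {B : Set ℕ | ¬ AddIP B}, {q : Ultrafilter ℕ | B ∈ q}ᶜ := by
      ext q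
      simp only [Set.mem_setOf_eq, Set.mem_iInter, Set.mem_compl_iff]
      constructor
      · intro h B hB hBq; exact hB (h B hBq)
      · intro h B hBq; by_contra hB; exact h B hB hBq
    rw [this]
    exact isClosed_biInter fun B _ => (ultrafilter_isOpen_basic _).isClosed_compl
  have hSne : S.Nonempty := ⟨r, hrC, hrIP⟩
  have hSmul : ∀ p ∈ S, ∀ q ∈ S, uop (· * ·) p q ∈ S := by
    intro p hp q hq
    constructor
    · intro m
      rw [mem_uop]
      refine Filter.mem_of_superset (hp.1 1) ?_
      intro a ha
      refine Filter.mem_of_superset (hq.1 m) ?_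
      intro b hb
      simp only [Set.mem_setOf_eq] at ha hb ⊢
      calc m ≤ b := hb
        _ = 1 * b := (one_mul b).symm
        _ ≤ a * b := Nat.mul_le_mul_right b ha
    · intro B hB
      rw [mem_uop] at hB
      obtain ⟨a, haB, ha1⟩ := Ultrafilter.nonempty_of_mem (Filter.inter_mem hB (hp.1 1))
      obtain ⟨w, hw1, hw2, hw3⟩ := hq.2 _ haB
      refine ⟨fun t => a * w t, fun s t hst => ?_, fun t => ?_, fun H hH => ?_⟩
      · have h0 : (0:ℕ) < a := ha1
        exact Nat.mul_lt_mul_of_le_of_lt le_rfl (hw1 hst) h0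
      · calc (1:ℕ) = 1 * 1 := (one_mul 1).symm
          _ ≤ a * w t := Nat.mul_le_mul ha1 (hw2 t)
      · rw [← Finset.mul_sum]
        exact hw3 H hH
  obtain ⟨qq, hqqS, hqqidem⟩ := exists_idem_uop (op := (· * ·))
    (fun a b c => mul_assoc a b c) hSne hScl hSmul
  exact ⟨qq, hqqS.1, hqqS.2, hqqidem⟩

end Good

section MainRec
open Filter Set

def XL (L : List ℕ) (t : ℕ) : ℕ := L.getD t 1
def prL (L : List ℕ) (H : Finset ℕ) : ℕ := ∏ t ∈ H, XL L t
def twL (L : List ℕ) (l : List ℕ) : ℕ := l.foldl (fun a i => XL L i ^ a) 1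

theorem XL_append {L : List ℕ} {y t : ℕ} (h : t < L.length) : XL (L ++ [y]) t = XL L t :=
  List.getD_append _ _ _ _ h

theorem XL_append_len {L : List ℕ} {y : ℕ} : XL (L ++ [y]) L.length = y := getD_concat L y

theorem XL_one_le {L : List ℕ} (h2 : ∀ a ∈ L, 2 ≤ a) (t : ℕ) : 1 ≤ XL L t := by
  rcases lt_or_ge t L.length with h | h
  · exact le_trans (by norm_num) (h2 _ (getD_mem h))
  · rw [XL, List.getD_eq_default _ _ h]

theorem prL_append {L : List ℕ} {y : ℕ} {H : Finset ℕ}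
    (hH : H ∈ (Finset.range L.length).powerset) : prL (L ++ [y]) H = prL L H :=
  Finset.prod_congr rfl fun t ht =>
    XL_append (Finset.mem_range.mp (Finset.mem_powerset.mp hH ht))

theorem foldl_pow_congr (f g : ℕ → ℕ) :
    ∀ (l : List ℕ) (a : ℕ), (∀ i ∈ l, f i = g i) →
      l.foldl (fun a i => f i ^ a) a = l.foldl (fun a i => g i ^ a) a
  | [], a, _ => rfl
  | i :: l, a, h => by
    simp only [List.foldl_cons]
    rw [h i (List.mem_cons_self)]
    exact foldl_pow_congr f g l _ fun j hj => h j (List.mem_cons_of_mem _ hj)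

theorem twL_congr {L L' : List ℕ} {l : List ℕ} (h : ∀ i ∈ l, XL L' i = XL L i) :
    twL L' l = twL L l := foldl_pow_congr _ _ l 1 h

theorem one_le_foldl_pow (f : ℕ → ℕ) (hf : ∀ i, 1 ≤ f i) :
    ∀ (l : List ℕ) (a : ℕ), 1 ≤ a → 1 ≤ l.foldl (fun a i => f i ^ a) a
  | [], a, ha => ha
  | i :: l, a, _ => by
    simp only [List.foldl_cons]
    exact one_le_foldl_pow f hf l _ (Nat.one_le_pow _ _ (hf i))

theorem twL_pos {L : List ℕ} (h2 : ∀ a ∈ L, 2 ≤ a) (l : List ℕ) : 1 ≤ twL L l :=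
  one_le_foldl_pow _ (XL_one_le h2) l 1 le_rfl

theorem sort_chain' {l : List ℕ} (h : l.Chain' (· < ·)) :
    l.toFinset.sort (· ≤ ·) = l := by
  have hp : l.Pairwise (· < ·) := List.isChain_iff_pairwise.mp h
  have hnd : l.Nodup := hp.imp ne_of_lt
  refine List.Perm.eq_of_pairwise' (Finset.pairwise_sort _ _) (hp.imp le_of_lt) ?_
  refine List.perm_of_nodup_nodup_toFinset_eq (Finset.sort_nodup _ _) hnd ?_
  rw [Finset.sort_toFinset]

theorem last_decomp {l : List ℕ} {n : ℕ} (hc : l.Chain' (· < ·)) (hn : n ∈ l)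
    (hb : ∀ t ∈ l, t < n + 1) :
    ∃ l', l = l' ++ [n] ∧ l'.Chain' (· < ·) ∧ ∀ t ∈ l', t < n := by
  have hne : l ≠ [] := List.ne_nil_of_mem hn
  have hdec := List.dropLast_append_getLast hne
  have hp : l.Pairwise (· < ·) := List.isChain_iff_pairwise.mp hc
  have hp' : (l.dropLast ++ [l.getLast hne]).Pairwise (· < ·) := by rw [hdec]; exact hp
  rw [List.pairwise_append] at hp'
  have hlast : l.getLast hne = n := by
    have h1 : l.getLast hne < n + 1 := hb _ (List.getLast_mem hne)
    have hn' : n ∈ l.dropLast ++ [l.getLast hne] := by rw [hdec]; exact hn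
    rcases List.mem_append.mp hn' with h | h
    · have := hp'.2.2 n h _ (List.mem_singleton_self _)
      omega
    · exact (List.mem_singleton.mp h).symm
  refine ⟨l.dropLast, by rw [← hlast, hdec], List.isChain_iff_pairwise.mpr hp'.1, ?_⟩
  intro t ht
  have := hp'.2.2 t ht _ (List.mem_singleton_self _)
  omega

structure InvM (A : Set ℕ) (q : Ultrafilter ℕ) (L : List ℕ) : Prop where
  chain : L.Chain' (· < ·)
  two : ∀ a ∈ L, 2 ≤ a
  J1 : ∀ H ∈ (Finset.range L.length).powerset, {y | prL L H * y ∈ A} ∈ q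
  J2 : ∀ i ∈ Finset.range L.length, ∀ H ∈ (Finset.Ioo i L.length).powerset,
        {y | (XL L i ^ prL L H) ^ y ∈ A} ∈ q
  K1 : ∀ H ∈ (Finset.range L.length).powerset, H.Nonempty → prL L H ∈ A
  K2 : ∀ l : List ℕ, l ≠ [] → l.Chain' (· < ·) → (∀ t ∈ l, t < L.length) → twL L l ∈ A
  K3 : ∀ i ∈ Finset.range L.length, ∀ H ∈ (Finset.Ioo i L.length).powerset,
        XL L i ^ prL L H ∈ A

def NextM (A : Set ℕ) (q : Ultrafilter ℕ) (L : List ℕ) : Set ℕ :=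
  {y | 2 ≤ y ∧ ∀ a ∈ L, a < y} ∩ {y | {b | y ^ b ∈ A} ∈ q} ∩
  (⋂ H ∈ (Finset.range L.length).powerset,
      ({y | prL L H * y ∈ A} ∩ {y | {z | prL L H * (y * z) ∈ A} ∈ q} ∩
       {y | y ^ twL L (H.sort (· ≤ ·)) ∈ A})) ∩
  (⋂ i ∈ Finset.range L.length, ⋂ H ∈ (Finset.Ioo i L.length).powerset,
      ({y | (XL L i ^ prL L H) ^ y ∈ A} ∩ {y | {z | (XL L i ^ prL L H) ^ (y * z) ∈ A} ∈ q}))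

theorem NextM_mem {A : Set ℕ} {q : Ultrafilter ℕ} (hq : uop (· * ·) q q = q)
    (hcb : ∀ m : ℕ, {k | m ≤ k} ∈ q)
    (hR : ∀ v : ℕ, 1 ≤ v → {a | a ^ v ∈ A} ∈ q)
    (hG : {a | {b | a ^ b ∈ A} ∈ q} ∈ q)
    {L : List ℕ} (hInv : InvM A q L) : NextM A q L ∈ q := by
  refine Filter.inter_mem (Filter.inter_mem (Filter.inter_mem ?_ hG) ?_) ?_
  · refine Filter.mem_of_superset (hcb (L.foldr max 0 + 2)) ?_
    intro y hy
    have hy : L.foldr max 0 + 2 ≤ y := hy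
    exact ⟨by omega, fun a ha => by have := le_foldr_max ha; omega⟩
  · rw [Filter.biInter_finset_mem]
    intro H hH
    have h1 := hInv.J1 H hH
    refine Filter.inter_mem (Filter.inter_mem h1 (uop_star hq h1)) ?_
    exact hR _ (twL_pos hInv.two _)
  · rw [Filter.biInter_finset_mem]
    intro i hi
    rw [Filter.biInter_finset_mem]
    intro H hH
    have h2 := hInv.J2 i hi H hH
    exact Filter.inter_mem h2 (uop_star hq h2)

theorem InvM_step {A : Set ℕ} {q : Ultrafilter ℕ} {L : List ℕ}
    (hInv : InvM A q L) {y : ℕ} (hy : y ∈ NextM A q L) : InvM A q (L ++ [y]) := by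
  obtain ⟨⟨⟨⟨hy2, hybd⟩, hyG⟩, hyJ1⟩, hyJ2⟩ := hy
  have hJ1' : ∀ H ∈ (Finset.range L.length).powerset,
      prL L H * y ∈ A ∧ {z | prL L H * (y * z) ∈ A} ∈ q ∧ y ^ twL L (H.sort (· ≤ ·)) ∈ A := by
    intro H hH
    have := Set.mem_iInter₂.mp hyJ1 H hH
    exact ⟨this.1.1, this.1.2, this.2⟩
  have hJ2' : ∀ i ∈ Finset.range L.length, ∀ H ∈ (Finset.Ioo i L.length).powerset,
      (XL L i ^ prL L H) ^ y ∈ A ∧ {z | (XL L i ^ prL L H) ^ (y * z) ∈ A} ∈ q := by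
    intro i hi H hH
    have := Set.mem_iInter₂.mp (Set.mem_iInter₂.mp hyJ2 i hi) H hH
    exact ⟨this.1, this.2⟩
  have hlen : (L ++ [y]).length = L.length + 1 := by simp
  -- helper for subsets not containing the new index
  have hOld : ∀ H : Finset ℕ, H ∈ (Finset.range (L.length + 1)).powerset →
      L.length ∉ H → H ∈ (Finset.range L.length).powerset := by
    intro H hH hn
    rw [Finset.mem_powerset] at hH ⊢
    intro t ht
    have h1 := Finset.mem_range.mp (hH ht)
    have : t ≠ L.length := fun h => hn (h ▸ ht)
    rw [Finset.mem_range]; omega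
  have hErase : ∀ H : Finset ℕ, H ∈ (Finset.range (L.length + 1)).powerset →
      L.length ∈ H → (H.erase L.length ∈ (Finset.range L.length).powerset ∧
        prL (L ++ [y]) H = y * prL L (H.erase L.length)) := by
    intro H hH hn
    have hsub : H.erase L.length ∈ (Finset.range L.length).powerset := by
      rw [Finset.mem_powerset]
      intro t ht
      have h1 := Finset.mem_range.mp (Finset.mem_powerset.mp hH (Finset.erase_subset _ _ ht))
      have h2 := Finset.ne_of_mem_erase ht
      rw [Finset.mem_range]; omega
    refine ⟨hsub, ?_⟩
    have hins : H = insert L.length (H.erase L.length) := (Finset.insert_erase hn).symm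
    generalize hE : H.erase L.length = E at hsub hins ⊢
    rw [hins, prL, Finset.prod_insert (by rw [← hE]; exact Finset.notMem_erase _ _),
      XL_append_len]
    congr 1
    exact prL_append hsub
  constructor
  · show List.IsChain _ (L ++ [y]); rw [List.isChain_append]
    refine ⟨hInv.chain, List.isChain_singleton y, ?_⟩
    intro x hx z hz
    simp only [List.head?_cons, Option.mem_def, Option.some.injEq] at hz
    subst hz
    exact hybd x (List.mem_of_mem_getLast? hx)
  · intro a ha
    rcases List.mem_append.mp ha with h | h
    · exact hInv.two a h
    · rw [List.mem_singleton.mp h]; exact hy2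
  · -- J1
    intro H hH
    rw [hlen] at hH
    by_cases hn : L.length ∈ H
    · obtain ⟨hsub, hprod⟩ := hErase H hH hn
      have : {z | prL (L ++ [y]) H * z ∈ A} = {z | prL L (H.erase L.length) * (y * z) ∈ A} := by
        ext z
        simp only [Set.mem_setOf_eq, hprod]
        rw [show y * prL L (H.erase L.length) * z = prL L (H.erase L.length) * (y * z) by ring]
      rw [this]
      exact (hJ1' _ hsub).2.1
    · have hsub := hOld H hH hn
      rw [prL_append hsub]
      exact hInv.J1 H hsub
  · -- J2
    intro i hi H hH
    rw [hlen] at hi hH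
    rcases Nat.lt_succ_iff_lt_or_eq.mp (Finset.mem_range.mp hi) with hilt | hieq
    · -- i < L.length
      by_cases hn : L.length ∈ H
      · -- new index in the exponent product
        have hsub : H.erase L.length ∈ (Finset.Ioo i L.length).powerset := by
          rw [Finset.mem_powerset]
          intro t ht
          have h1 := Finset.mem_powerset.mp hH (Finset.erase_subset _ _ ht)
          have h2 := Finset.ne_of_mem_erase ht
          rw [Finset.mem_Ioo] at h1 ⊢
          omega
        have hins : H = insert L.length (H.erase L.length) := (Finset.insert_erase hn).symm
        have hprod : prL (L ++ [y]) H = y * prL L (H.erase L.length) := by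
          generalize hE : H.erase L.length = E at hsub hins ⊢
          rw [hins, prL, Finset.prod_insert (by rw [← hE]; exact Finset.notMem_erase _ _),
            XL_append_len]
          congr 1
          refine Finset.prod_congr rfl fun t ht => XL_append ?_
          exact (Finset.mem_Ioo.mp (Finset.mem_powerset.mp hsub ht)).2
        have hXi : XL (L ++ [y]) i = XL L i := XL_append hilt
        have : {z | (XL (L ++ [y]) i ^ prL (L ++ [y]) H) ^ z ∈ A} =
            {z | (XL L i ^ prL L (H.erase L.length)) ^ (y * z) ∈ A} := by
          ext z
          simp only [Set.mem_setOf_eq, hXi, hprod, ← pow_mul]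
          rw [show y * prL L (H.erase L.length) * z = prL L (H.erase L.length) * (y * z) by ring]
        rw [this]
        exact (hJ2' i (Finset.mem_range.mpr hilt) _ hsub).2
      · -- old
        have hsub : H ∈ (Finset.Ioo i L.length).powerset := by
          rw [Finset.mem_powerset]
          intro t ht
          have h1 := Finset.mem_Ioo.mp (Finset.mem_powerset.mp hH ht)
          have : t ≠ L.length := fun h => hn (h ▸ ht)
          rw [Finset.mem_Ioo]; omega
        have hXi : XL (L ++ [y]) i = XL L i := XL_append hilt
        have hpr : prL (L ++ [y]) H = prL L H := by
          refine Finset.prod_congr rfl fun t ht => XL_append ?_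
          exact (Finset.mem_Ioo.mp (Finset.mem_powerset.mp hsub ht)).2
        rw [hXi, hpr]
        exact hInv.J2 i (Finset.mem_range.mpr hilt) H hsub
    · -- i = L.length : H ⊆ Ioo L.length (L.length+1) = ∅
      subst hieq
      have hHe : H = ∅ := by
        rw [Finset.mem_powerset] at hH
        refine Finset.subset_empty.mp ?_
        intro t ht
        have := Finset.mem_Ioo.mp (hH ht)
        omega
      subst hHe
      have : prL (L ++ [y]) ∅ = 1 := Finset.prod_empty
      rw [this, pow_one, XL_append_len]
      exact hyG
  · -- K1
    intro H hH hne
    rw [hlen] at hH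
    by_cases hn : L.length ∈ H
    · obtain ⟨hsub, hprod⟩ := hErase H hH hn
      rw [hprod, mul_comm]
      exact (hJ1' _ hsub).1
    · have hsub := hOld H hH hn
      rw [prL_append hsub]
      exact hInv.K1 H hsub hne
  · -- K2
    intro l hlne hlc hlb
    rw [hlen] at hlb
    by_cases hn : L.length ∈ l
    · obtain ⟨l', rfl, hl'c, hl'b⟩ := last_decomp hlc hn hlb
      have htw : twL (L ++ [y]) (l' ++ [L.length]) = y ^ twL L l' := by
        rw [twL, List.foldl_append]
        simp only [List.foldl_cons, List.foldl_nil]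
        rw [XL_append_len]
        congr 1
        refine (foldl_pow_congr _ _ l' 1 fun i hi => XL_append (hl'b i hi)).symm ▸ rfl
      have htw2 : twL (L ++ [y]) l' = twL L l' :=
        twL_congr fun i hi => XL_append (hl'b i hi)
      rw [twL, List.foldl_append]
      show List.foldl _ (twL (L ++ [y]) l') [L.length] ∈ A
      simp only [List.foldl_cons, List.foldl_nil]
      rw [XL_append_len, htw2]
      have hsub : l'.toFinset ∈ (Finset.range L.length).powerset := by
        rw [Finset.mem_powerset]
        intro t ht
        exact Finset.mem_range.mpr (hl'b t (List.mem_toFinset.mp ht))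
      have := (hJ1' _ hsub).2.2
      rwa [sort_chain' hl'c] at this
    · have : twL (L ++ [y]) l = twL L l := twL_congr fun i hi => XL_append (by
        have := hlb i hi
        have : i ≠ L.length := fun h => hn (h ▸ hi)
        omega)
      rw [this]
      refine hInv.K2 l hlne hlc fun t ht => ?_
      have h1 := hlb t ht
      have : t ≠ L.length := fun h => hn (h ▸ ht)
      omega
  · -- K3
    intro i hi H hH
    rw [hlen] at hi hH
    rcases Nat.lt_succ_iff_lt_or_eq.mp (Finset.mem_range.mp hi) with hilt | hieq
    · by_cases hn : L.length ∈ H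
      · have hsub : H.erase L.length ∈ (Finset.Ioo i L.length).powerset := by
          rw [Finset.mem_powerset]
          intro t ht
          have h1 := Finset.mem_powerset.mp hH (Finset.erase_subset _ _ ht)
          have h2 := Finset.ne_of_mem_erase ht
          rw [Finset.mem_Ioo] at h1 ⊢
          omega
        have hins : H = insert L.length (H.erase L.length) := (Finset.insert_erase hn).symm
        have hprod : prL (L ++ [y]) H = y * prL L (H.erase L.length) := by
          generalize hE : H.erase L.length = E at hsub hins ⊢
          rw [hins, prL, Finset.prod_insert (by rw [← hE]; exact Finset.notMem_erase _ _),
            XL_append_len]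
          congr 1
          refine Finset.prod_congr rfl fun t ht => XL_append ?_
          exact (Finset.mem_Ioo.mp (Finset.mem_powerset.mp hsub ht)).2
        rw [XL_append hilt, hprod, show y * prL L (H.erase L.length) =
          prL L (H.erase L.length) * y by ring, pow_mul]
        exact (hJ2' i (Finset.mem_range.mpr hilt) _ hsub).1
      · have hsub : H ∈ (Finset.Ioo i L.length).powerset := by
          rw [Finset.mem_powerset]
          intro t ht
          have h1 := Finset.mem_Ioo.mp (Finset.mem_powerset.mp hH ht)
          have : t ≠ L.length := fun h => hn (h ▸ ht)
          rw [Finset.mem_Ioo]; omega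
        have hpr : prL (L ++ [y]) H = prL L H := by
          refine Finset.prod_congr rfl fun t ht => XL_append ?_
          exact (Finset.mem_Ioo.mp (Finset.mem_powerset.mp hsub ht)).2
        rw [XL_append hilt, hpr]
        exact hInv.K3 i (Finset.mem_range.mpr hilt) H hsub
    · subst hieq
      have hHe : H = ∅ := by
        rw [Finset.mem_powerset] at hH
        refine Finset.subset_empty.mp ?_
        intro t ht
        have := Finset.mem_Ioo.mp (hH ht)
        omega
      subst hHe
      rw [prL, Finset.prod_empty, pow_one, XL_append_len]
      have := (hJ1' ∅ (Finset.empty_mem_powerset _)).1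
      rwa [prL, Finset.prod_empty, one_mul] at this

theorem mainRec (A : Set ℕ) (q : Ultrafilter ℕ) (hq : umul q q = q)
    (hcb : ∀ m : ℕ, {k | m ≤ k} ∈ q) (hA : A ∈ q)
    (hR : ∀ v : ℕ, 1 ≤ v → {a | a ^ v ∈ A} ∈ q)
    (hG : {a | {b | a ^ b ∈ A} ∈ q} ∈ q) :
    ∃ x : ℕ → ℕ, (∀ n, 2 ≤ x n) ∧ FP x ∪ EXP1 x ∪ EXP2 x ⊆ A := by
  classical
  have hq' : uop (· * ·) q q = q := hq
  set step : List ℕ → ℕ := fun L =>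
    if h : (NextM A q L).Nonempty then h.choose else 0 with hstep
  have hInvAll : ∀ n, InvM A q (chainBuild step n) := by
    intro n
    induction n with
    | zero =>
      have hlen : (chainBuild step 0).length = 0 := rfl
      refine ⟨List.isChain_nil, by simp [chainBuild], ?_, ?_, ?_, ?_, ?_⟩
      · intro H hH
        rw [hlen] at hH
        have : H = ∅ := by
          rw [Finset.mem_powerset] at hH
          simpa using Finset.subset_empty.mp (by simpa using hH)
        subst this
        have : {y | prL (chainBuild step 0) ∅ * y ∈ A} = A := by
          ext z; simp [prL]
        rw [this]; exact hA
      · intro i hi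
        rw [hlen] at hi; simp at hi
      · intro H hH hne
        rw [hlen] at hH
        rw [Finset.mem_powerset] at hH
        have : H = ∅ := by simpa using Finset.subset_empty.mp (by simpa using hH)
        subst this
        exact absurd rfl hne.ne_empty
      · intro l hlne hlc hlb
        rw [hlen] at hlb
        rcases List.exists_mem_of_ne_nil l hlne with ⟨t, ht⟩
        exact absurd (hlb t ht) (by omega)
      · intro i hi
        rw [hlen] at hi; simp at hi
    | succ n ih =>
      have hne : (NextM A q (chainBuild step n)).Nonempty :=
        Ultrafilter.nonempty_of_mem (NextM_mem hq' hcb hR hG ih)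
      have hmem : step (chainBuild step n) ∈ NextM A q (chainBuild step n) := by
        rw [hstep] at hne ⊢; simp only [dif_pos hne]; exact hne.choose_spec
      exact InvM_step ih hmem
  set x : ℕ → ℕ := seqOf step with hx
  have hx2 : ∀ n, 2 ≤ x n := by
    intro n
    have h := (hInvAll (n + 1)).two
    refine h _ ?_
    rw [hx, seqOf]
    exact getD_mem (by rw [chainBuild_length]; omega)
  refine ⟨x, hx2, ?_⟩
  rintro v (hv | hv)
  · rcases hv with hv | hv
    · -- FP
      obtain ⟨H, hne, rfl⟩ := hv
      set N := H.sup id + 1 with hN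
      have hHsub : H ∈ (Finset.range N).powerset := by
        rw [Finset.mem_powerset]
        intro t ht
        exact Finset.mem_range.mpr (Nat.lt_succ_of_le (Finset.le_sup (f := id) ht))
      have heq : prL (chainBuild step N) H = ∏ t ∈ H, x t := by
        refine Finset.prod_congr rfl fun t ht => ?_
        exact seqOf_eq step (Finset.mem_range.mp (Finset.mem_powerset.mp hHsub ht))
      rw [← heq]
      exact (hInvAll N).K1 H (by rwa [chainBuild_length]) hne
    · -- EXP1
      obtain ⟨l, hlne, hlc, rfl⟩ := hv
      set N := l.foldr max 0 + 1 with hN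
      have hbl : ∀ t ∈ l, t < N := fun t ht => by
        have := le_foldr_max ht; omega
      have heq : l.foldl (fun a i => x i ^ a) 1 = twL (chainBuild step N) l := by
        refine foldl_pow_congr _ _ l 1 fun i hi => ?_
        exact (seqOf_eq step (hbl i hi)).symm
      rw [heq]
      exact (hInvAll N).K2 l hlne hlc (by rwa [chainBuild_length])
  · -- EXP2
    obtain ⟨i, l, hlc, rfl⟩ := hv
    set N := (i :: l).foldr max 0 + 1 with hN
    have hbl : ∀ t ∈ i :: l, t < N := fun t ht => by
      have := le_foldr_max ht; omega
    have hp := List.isChain_iff_pairwise.mp hlc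
    have hil : ∀ t ∈ l, i < t := (List.pairwise_cons.mp hp).1
    have hlc' : l.Chain' (· < ·) := hlc.tail
    have hnd : l.Nodup := (List.isChain_iff_pairwise.mp hlc').imp ne_of_lt
    have hprodeq : (l.map x).prod = prL (chainBuild step N) l.toFinset := by
      rw [← List.prod_toFinset x hnd]
      refine Finset.prod_congr rfl fun t ht => ?_
      exact (seqOf_eq step (hbl t (List.mem_cons_of_mem _ (List.mem_toFinset.mp ht)))).symm
    have hxi : x i = XL (chainBuild step N) i :=
      (seqOf_eq step (hbl i (List.mem_cons_self))).symm
    rw [hprodeq, hxi]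
    refine (hInvAll N).K3 i ?_ l.toFinset ?_
    · rw [chainBuild_length]
      exact Finset.mem_range.mpr (hbl i (List.mem_cons_self))
    · rw [chainBuild_length, Finset.mem_powerset]
      intro t ht
      have htl := List.mem_toFinset.mp ht
      exact Finset.mem_Ioo.mpr ⟨hil t htl, hbl t (List.mem_cons_of_mem _ htl)⟩

end MainRec

theorem stmt12 (A : Set ℕ) (hA : MIPstar A) :
    ∃ x : ℕ → ℕ, (∀ n, 2 ≤ x n) ∧ FP x ∪ EXP1 x ∪ EXP2 x ⊆ A := by
  obtain ⟨q, hcb, hIP, hqq⟩ := exists_good_q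
  have hq' : uop (· * ·) q q = q := hqq
  have hAq : A ∈ q := by
    by_contra h
    have hc : Aᶜ ∈ q := Ultrafilter.compl_mem_iff_notMem.mpr h
    obtain ⟨y, hmono, hy⟩ := GGmul hq' hcb (Filter.inter_mem hc (hcb 2))
    have h2 : ∀ n, 2 ≤ y n := fun n => by
      simpa using (hy {n} (Finset.singleton_nonempty n)).2
    obtain ⟨a, haA, H, hne, rfl⟩ := hA y hmono.injective h2
    exact (hy H hne).1 haA
  have hR : ∀ v : ℕ, 1 ≤ v → {a | a ^ v ∈ A} ∈ q := by
    intro v hv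
    by_contra h
    have hc : {a | a ^ v ∈ A}ᶜ ∈ q := Ultrafilter.compl_mem_iff_notMem.mpr h
    obtain ⟨y, hmono, hy⟩ := GGmul hq' hcb (Filter.inter_mem hc (hcb 2))
    have h2 : ∀ n, 2 ≤ y n := fun n => by
      simpa using (hy {n} (Finset.singleton_nonempty n)).2
    have hxmono : StrictMono (fun t => y t ^ v) := fun s t hst =>
      Nat.pow_lt_pow_left (hmono hst) (by omega)
    have hx2 : ∀ n, 2 ≤ y n ^ v := fun n =>
      le_trans (h2 n) (Nat.le_self_pow (by omega) _)
    obtain ⟨a, haA, H, hne, haeq⟩ := hA _ hxmono.injective hx2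
    have haeq' : a = (∏ t ∈ H, y t) ^ v := by
      rw [haeq]; exact Finset.prod_pow H v y
    rw [haeq'] at haA
    exact (hy H hne).1 haA
  have hG : {a | {b | a ^ b ∈ A} ∈ q} ∈ q := by
    by_contra h
    have hc : {a | {b | a ^ b ∈ A} ∈ q}ᶜ ∈ q := Ultrafilter.compl_mem_iff_notMem.mpr h
    obtain ⟨a, ha, ha2⟩ := Ultrafilter.nonempty_of_mem (Filter.inter_mem hc (hcb 2))
    have ha2 : (2:ℕ) ≤ a := ha2
    have hV : {b | a ^ b ∈ A}ᶜ ∈ q := Ultrafilter.compl_mem_iff_notMem.mpr ha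
    obtain ⟨w, hwmono, hw1, hwsum⟩ := hIP _ hV
    have hxmono : StrictMono (fun t => a ^ w t) := fun s t hst =>
      Nat.pow_lt_pow_right (by omega : 1 < a) (hwmono hst)
    have hx2 : ∀ n, 2 ≤ a ^ w n := fun n => by
      calc (2:ℕ) ≤ a := ha2
        _ = a ^ 1 := (pow_one a).symm
        _ ≤ a ^ w n := Nat.pow_le_pow_right (by omega) (hw1 n)
    obtain ⟨c, hcA, H, hne, hceq⟩ := hA _ hxmono.injective hx2
    have hceq' : c = a ^ (∑ t ∈ H, w t) := by
      rw [hceq]; exact Finset.prod_pow_eq_pow_sum H w a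
    rw [hceq'] at hcA
    exact (hwsum H hne) hcA
  exact mainRec A q hqq hcb hAq hR hG
end

section
/- There exists an additive IP* set F ⊆ ℕ such that for every n ∈ ℕ with n ≥ 1, the translate −n + F = { m ∈ ℕ : m + n ∈ F } is not an additive IP* set. -/
open scoped BigOperators

namespace Stmt15Aux

/-- The "bad" set: `m ∈ badU` iff there is a cut value `n ≥ 1` and a set bit `q` of `m`
such that the bits of `m` below `q` spell exactly `n`, and every set bit `p ≥ q` of `m`
is at a position with `p % 2^(n+2) = 2^(n+1)` (i.e. 2-adic valuation of `p` is `n+1`). -/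
def badU : Set ℕ :=
  {m | ∃ n q : ℕ, 1 ≤ n ∧ m % 2 ^ q = n ∧ (m / 2 ^ q) % 2 = 1 ∧
    ∀ p, q ≤ p → (m / 2 ^ p) % 2 = 1 → p % 2 ^ (n + 2) = 2 ^ (n + 1)}

lemma uniq {p n m : ℕ} (hn : p % 2 ^ (n + 2) = 2 ^ (n + 1))
    (hm : p % 2 ^ (m + 2) = 2 ^ (m + 1)) : n = m := by
  rcases lt_trichotomy n m with h | h | h
  · exfalso
    have h1 : p % 2 ^ (m + 2) % 2 ^ (n + 2) = p % 2 ^ (n + 2) :=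
      Nat.mod_mod_of_dvd p (pow_dvd_pow 2 (by omega))
    rw [hm, hn] at h1
    have hd : (2:ℕ) ^ (n + 2) ∣ 2 ^ (m + 1) := pow_dvd_pow 2 (by omega)
    obtain ⟨c, hc⟩ := hd
    rw [hc, Nat.mul_mod_right] at h1
    have : (0:ℕ) < 2 ^ (n + 1) := by positivity
    omega
  · exact h
  · exfalso
    have h1 : p % 2 ^ (n + 2) % 2 ^ (m + 2) = p % 2 ^ (m + 2) :=
      Nat.mod_mod_of_dvd p (pow_dvd_pow 2 (by omega))
    rw [hm, hn] at h1
    have hd : (2:ℕ) ^ (m + 2) ∣ 2 ^ (n + 1) := pow_dvd_pow 2 (by omega)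
    obtain ⟨c, hc⟩ := hd
    rw [hc, Nat.mul_mod_right] at h1
    have : (0:ℕ) < 2 ^ (m + 1) := by positivity
    omega

lemma small_add_lt {k s b p : ℕ} (hd : 2 ^ k ∣ b) (hs : s < 2 ^ k) (hk : k ≤ p) :
    s + b % 2 ^ p < 2 ^ p := by
  have hd2 : (2:ℕ) ^ k ∣ 2 ^ p := pow_dvd_pow 2 hk
  have hdr : (2:ℕ) ^ k ∣ b % 2 ^ p := (Nat.dvd_mod_iff hd2).2 hd
  have hr : b % 2 ^ p < 2 ^ p := Nat.mod_lt _ (by positivity)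
  rcases Nat.eq_zero_or_pos (b % 2 ^ p) with h0 | h0
  · have : (2:ℕ) ^ k ≤ 2 ^ p := Nat.pow_le_pow_right (by norm_num) hk
    omega
  · have hsub : (2:ℕ) ^ k ∣ 2 ^ p - b % 2 ^ p := Nat.dvd_sub hd2 hdr
    have := Nat.le_of_dvd (by omega) hsub
    omega

lemma step_mod {k s b p : ℕ} (hd : 2 ^ k ∣ b) (hs : s < 2 ^ k) (hk : k ≤ p) :
    (s + b) % 2 ^ p = s + b % 2 ^ p := by
  have hlt := small_add_lt hd hs hk
  have h1 : s + b = s + b % 2 ^ p + 2 ^ p * (b / 2 ^ p) := by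
    have := Nat.mod_add_div b (2 ^ p); omega
  rw [h1, Nat.add_mul_mod_self_left, Nat.mod_eq_of_lt hlt]

lemma step_div {k s b p : ℕ} (hd : 2 ^ k ∣ b) (hs : s < 2 ^ k) (hk : k ≤ p) :
    (s + b) / 2 ^ p = b / 2 ^ p := by
  have hlt := small_add_lt hd hs hk
  have h1 : s + b = s + b % 2 ^ p + 2 ^ p * (b / 2 ^ p) := by
    have := Nat.mod_add_div b (2 ^ p); omega
  rw [h1, Nat.add_mul_div_left _ _ (by positivity : (0:ℕ) < 2 ^ p),
    Nat.div_eq_of_lt hlt, Nat.zero_add]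

lemma sum_range_two_pow (p : ℕ) : ∑ j ∈ Finset.range p, 2 ^ j = 2 ^ p - 1 := by
  induction p with
  | zero => simp
  | succ n ih =>
    rw [Finset.sum_range_succ, ih, pow_succ]
    have : (0:ℕ) < 2 ^ n := by positivity
    omega

/-- Key lemma: if `2^(a+1) ∣ b` with `a ≥ 1`, then `b` and `a + b` cannot both be bad. -/
lemma keylemma {a b : ℕ} (ha : 1 ≤ a) (hb : b % 2 ^ (a + 1) = 0)
    (h1 : b ∈ badU) (h2 : a + b ∈ badU) : False := by
  obtain ⟨nb, qb, hnb1, hnbmod, hnbbit, Hb⟩ := h1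
  obtain ⟨nc, qc, hnc1, hncmod, hncbit, Hc⟩ := h2
  have ha2 : a < 2 ^ (a + 1) := by
    have h := Nat.lt_two_pow_self (n := a)
    have : (2:ℕ) ^ a ≤ 2 ^ (a + 1) := Nat.pow_le_pow_right (by norm_num) (by omega)
    omega
  have hdb : 2 ^ (a + 1) ∣ b := Nat.dvd_of_mod_eq_zero hb
  -- q_b > a + 1
  have hqb : a + 1 < qb := by
    by_contra h
    push_neg at h
    have h3 : b % 2 ^ (a + 1) % 2 ^ qb = b % 2 ^ qb :=
      Nat.mod_mod_of_dvd b (pow_dvd_pow 2 h)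
    rw [hb, hnbmod] at h3
    simp at h3
    omega
  -- 2^(a+1) ∣ n_b, hence n_b ≥ 2^(a+1) > a
  have hdnb : 2 ^ (a + 1) ∣ nb := by
    have h3 : b % 2 ^ qb % 2 ^ (a + 1) = b % 2 ^ (a + 1) :=
      Nat.mod_mod_of_dvd b (pow_dvd_pow 2 (le_of_lt hqb))
    rw [hnbmod, hb] at h3
    exact Nat.dvd_of_mod_eq_zero h3
  have hnb_big : 2 ^ (a + 1) ≤ nb := Nat.le_of_dvd (by omega) hdnb
  -- dividing / reducing `a + b` above level a+1 ignores `a`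
  have hcd : ∀ p, a + 1 ≤ p → (a + b) / 2 ^ p = b / 2 ^ p :=
    fun p hp => step_div hdb ha2 hp
  have hcm : ∀ j, a + 1 ≤ j → (a + b) % 2 ^ j = a + b % 2 ^ j :=
    fun j hj => step_mod hdb ha2 hj
  rcases le_or_gt qc (a + 1) with hqc | hqc
  · -- case q_c ≤ a+1 : the bit q_b of a+b equals bit q_b of b, is set; match cut values
    have hbitqb : ((a + b) / 2 ^ qb) % 2 = 1 := by
      rw [hcd qb (le_of_lt hqb)]; exact hnbbit
    have e1 := Hc qb (le_trans hqc (le_of_lt hqb)) hbitqb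
    have e2 := Hb qb le_rfl hnbbit
    have hnn : nc = nb := uniq e1 e2
    have hnc_small : nc < 2 ^ (a + 1) := by
      rw [← hncmod]
      calc (a + b) % 2 ^ qc < 2 ^ qc := Nat.mod_lt _ (by positivity)
        _ ≤ 2 ^ (a + 1) := Nat.pow_le_pow_right (by norm_num) hqc
    omega
  · -- case q_c > a+1
    have hncval : nc = a + b % 2 ^ qc := by
      rw [← hncmod, hcm qc (le_of_lt hqc)]
    rcases le_or_gt qc qb with hle | hlt
    · -- q_c ≤ q_b
      have hbitqb : ((a + b) / 2 ^ qb) % 2 = 1 := by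
        rw [hcd qb (le_of_lt hqb)]; exact hnbbit
      have e1 := Hc qb hle hbitqb
      have e2 := Hb qb le_rfl hnbbit
      have hnn : nc = nb := uniq e1 e2
      have h4 : b % 2 ^ qc = nb % 2 ^ qc := by
        rw [← hnbmod]
        exact (Nat.mod_mod_of_dvd b (pow_dvd_pow 2 hle)).symm
      have h5 : nb = a + nb % 2 ^ qc := by
        rw [← h4]; omega
      have hmd := Nat.mod_add_div nb (2 ^ qc)
      have ha_eq : a = 2 ^ qc * (nb / 2 ^ qc) := by omega
      have hq2 : a < 2 ^ qc := by
        have : (2:ℕ) ^ (a + 1) ≤ 2 ^ qc := Nat.pow_le_pow_right (by norm_num) (le_of_lt hqc)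
        omega
      rcases Nat.eq_zero_or_pos (nb / 2 ^ qc) with h0 | h0
      · rw [h0, Nat.mul_zero] at ha_eq; omega
      · have : 2 ^ qc ≤ 2 ^ qc * (nb / 2 ^ qc) := Nat.le_mul_of_pos_right _ h0
        omega
    · -- q_b < q_c
      have hbitqc : (b / 2 ^ qc) % 2 = 1 := by
        rw [← hcd qc (le_of_lt hqc)]; exact hncbit
      have e1 := Hb qc (le_of_lt hlt) hbitqc
      have e2 := Hc qc le_rfl hncbit
      have hnn : nb = nc := uniq e1 e2
      have h4 : (b % 2 ^ qc) % 2 ^ qb = nb := by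
        rw [Nat.mod_mod_of_dvd b (pow_dvd_pow 2 (le_of_lt hlt)), hnbmod]
      have h5 : nb ≤ b % 2 ^ qc := by
        have := Nat.mod_le (b % 2 ^ qc) (2 ^ qb)
        omega
      omega

/-- The complement of `badU` is an additive IP* set. -/
lemma F_IPstar : AIPstar {m : ℕ | m ∉ badU} := by
  intro x
  by_cases hx : ∃ t, x t = 0
  · obtain ⟨t, ht⟩ := hx
    refine ⟨0, ?_, ⟨{t}, ⟨t, Finset.mem_singleton_self t⟩, by simp [ht]⟩⟩
    rintro ⟨n, q, hn, hmod, hbit, _⟩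
    simp at hbit
  · push_neg at hx
    set a := x 0 with ha_def
    have ha : 1 ≤ a := Nat.one_le_iff_ne_zero.2 (hx 0)
    set M := 2 ^ (a + 1) with hM
    -- partial sums of the tail
    set s : ℕ → ℕ := fun k => ∑ t ∈ Finset.Ioc 0 k, x t with hs_def
    have hmap : ∀ k ∈ Finset.range (M + 1), s k % M ∈ Finset.range M := by
      intro k _
      exact Finset.mem_range.2 (Nat.mod_lt _ (by positivity))
    obtain ⟨k, hk, l, hl, hkl, heq⟩ :=
      Finset.exists_ne_map_eq_of_card_lt_of_maps_to (by simp) hmap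
    -- order them
    obtain ⟨k', l', hkl', heq'⟩ : ∃ k' l', k' < l' ∧ s k' % M = s l' % M := by
      rcases Ne.lt_or_gt hkl with h | h
      · exact ⟨k, l, h, heq⟩
      · exact ⟨l, k, h, heq.symm⟩
    set b := ∑ t ∈ Finset.Ioc k' l', x t with hb_def
    have hsum : s k' + b = s l' :=
      Finset.sum_Ioc_consecutive x (Nat.zero_le k') (le_of_lt hkl')
    have hble : s k' ≤ s l' := by omega
    have hdvd : M ∣ s l' - s k' := (Nat.modEq_iff_dvd' hble).1 heq'
    have hbmod : b % M = 0 := by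
      have hbe : s l' - s k' = b := by omega
      rw [hbe] at hdvd
      obtain ⟨c, hc⟩ := hdvd
      rw [hc, Nat.mul_mod_right]
    have hbFS : b ∈ FS x := ⟨Finset.Ioc k' l', ⟨l', by simp [Finset.mem_Ioc]; omega⟩, rfl⟩
    have habFS : a + b ∈ FS x := by
      refine ⟨insert 0 (Finset.Ioc k' l'), ⟨0, Finset.mem_insert_self _ _⟩, ?_⟩
      rw [Finset.sum_insert (by simp [Finset.mem_Ioc])]
    by_cases hbU : b ∈ badU
    · exact ⟨a + b, fun hc => keylemma ha hbmod hbU hc, habFS⟩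
    · exact ⟨b, hbU, hbFS⟩

/-- For each `n ≥ 1`, every element of `n + FS (fun t => 2^(2^(n+1)*(2t+1)))` is bad. -/
lemma translate_bad {n : ℕ} (hn : 1 ≤ n) {m : ℕ}
    (hm : m ∈ FS (fun t => 2 ^ (2 ^ (n + 1) * (2 * t + 1)))) : m + n ∈ badU := by
  obtain ⟨H, hH, hmsum⟩ := hm
  set e : ℕ → ℕ := fun t => 2 ^ (n + 1) * (2 * t + 1) with he_def
  have he_mono : ∀ ⦃s t : ℕ⦄, s < t → e s < e t := by
    intro s t hst
    have : (0:ℕ) < 2 ^ (n + 1) := by positivity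
    simp only [he_def]
    exact (Nat.mul_lt_mul_left this).mpr (by omega)
  have he_inj : ∀ s t : ℕ, e s = e t → s = t := by
    intro s t h
    rcases lt_trichotomy s t with h' | h' | h'
    · exact absurd h (Nat.ne_of_lt (he_mono h'))
    · exact h'
    · exact absurd h.symm (Nat.ne_of_lt (he_mono h'))
  set t₀ := H.min' hH with ht0
  set q := e t₀ with hq_def
  have hq_le : ∀ t ∈ H, q ≤ e t := by
    intro t ht
    rcases eq_or_lt_of_le (H.min'_le t ht) with h | h
    · exact le_of_eq (congrArg e h)
    · exact le_of_lt (he_mono h)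
  have hdm : 2 ^ q ∣ m := by
    rw [hmsum]
    exact Finset.dvd_sum fun t ht => pow_dvd_pow 2 (hq_le t ht)
  have hq_big : 2 ^ (n + 1) ≤ q := by
    have : (1:ℕ) ≤ 2 * t₀ + 1 := by omega
    calc (2:ℕ) ^ (n + 1) = 2 ^ (n + 1) * 1 := by ring
      _ ≤ 2 ^ (n + 1) * (2 * t₀ + 1) := Nat.mul_le_mul_left _ this
  have hn1q : n + 1 ≤ q := by
    have := Nat.lt_two_pow_self (n := n + 1)
    omega
  have hnq : n < 2 ^ q := by
    have h1 := Nat.lt_two_pow_self (n := n + 1)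
    have h2 : (2:ℕ) ^ (n + 1) ≤ 2 ^ q := Nat.pow_le_pow_right (by norm_num) hn1q
    omega
  refine ⟨n, q, hn, ?_, ?_, ?_⟩
  · -- (m + n) % 2^q = n
    obtain ⟨c, hc⟩ := hdm
    rw [hc, Nat.add_comm, Nat.add_mul_mod_self_left, Nat.mod_eq_of_lt hnq]
  · -- bit q of m + n is set
    have hdiv : (m + n) / 2 ^ q = m / 2 ^ q := by
      rw [Nat.add_comm]
      exact step_div hdm hnq le_rfl
    rw [hdiv]
    -- m = 2^q + (multiple of 2^(q+1))
    have hsplit : 2 ^ q + ∑ t ∈ H.erase t₀, 2 ^ e t = m := by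
      rw [hmsum]
      exact Finset.add_sum_erase H (fun t => 2 ^ e t) (H.min'_mem hH)
    have hdvd2 : 2 ^ (q + 1) ∣ ∑ t ∈ H.erase t₀, 2 ^ e t := by
      refine Finset.dvd_sum fun t ht => pow_dvd_pow 2 ?_
      have ht' := Finset.mem_erase.1 ht
      have : t₀ < t := lt_of_le_of_ne (H.min'_le t ht'.2) (Ne.symm ht'.1)
      exact Nat.succ_le_of_lt (he_mono this)
    obtain ⟨c, hc⟩ := hdvd2
    have hm_eq : m = 2 ^ q * (1 + 2 * c) := by
      rw [← hsplit, hc, pow_succ]; ring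
    rw [hm_eq, Nat.mul_div_cancel_left _ (by positivity : (0:ℕ) < 2 ^ q)]
    omega
  · -- every set bit p ≥ q of m + n has p % 2^(n+2) = 2^(n+1)
    intro p hp hbit
    have hdiv : (m + n) / 2 ^ p = m / 2 ^ p := by
      rw [Nat.add_comm]
      exact step_div hdm hnq hp
    rw [hdiv] at hbit
    by_cases hpe : ∃ t ∈ H, e t = p
    · obtain ⟨t, _, rfl⟩ := hpe
      have h1 : e t = 2 ^ (n + 2) * t + 2 ^ (n + 1) := by
        simp only [he_def]; ring
      have hlt2 : (2:ℕ) ^ (n + 1) < 2 ^ (n + 2) := by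
        have h0 : (0:ℕ) < 2 ^ (n + 1) := by positivity
        calc (2:ℕ) ^ (n + 1) < 2 ^ (n + 1) * 2 := by omega
          _ = 2 ^ (n + 2) := (pow_succ 2 (n + 1)).symm
      rw [h1, Nat.mul_add_mod]
      exact Nat.mod_eq_of_lt hlt2
    · exfalso
      push_neg at hpe
      classical
      have hsplit := Finset.sum_filter_add_sum_filter_not H (fun t => e t < p)
        (fun t => 2 ^ e t)
      set m₁ := ∑ t ∈ H.filter (fun t => e t < p), 2 ^ e t with hm1
      set m₂ := ∑ t ∈ H.filter (fun t => ¬ e t < p), 2 ^ e t with hm2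
      have hm1lt : m₁ < 2 ^ p := by
        rw [hm1, ← Finset.sum_image (g := e) (f := fun j => 2 ^ j)
          (fun x hx y hy h => he_inj x y h)]
        have hsub : (H.filter (fun t => e t < p)).image e ⊆ Finset.range p := by
          intro j hj
          obtain ⟨t, ht, rfl⟩ := Finset.mem_image.1 hj
          exact Finset.mem_range.2 (Finset.mem_filter.1 ht).2
        calc ∑ j ∈ (H.filter (fun t => e t < p)).image e, 2 ^ j
            ≤ ∑ j ∈ Finset.range p, 2 ^ j :=
              Finset.sum_le_sum_of_subset hsub
          _ = 2 ^ p - 1 := sum_range_two_pow p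
          _ < 2 ^ p := by
              have h0 : (0:ℕ) < 2 ^ p := by positivity
              omega
      have hm2dvd : 2 ^ (p + 1) ∣ m₂ := by
        rw [hm2]
        refine Finset.dvd_sum fun t ht => pow_dvd_pow 2 ?_
        have ht' := Finset.mem_filter.1 ht
        have h1 : ¬ e t < p := ht'.2
        have h2 : e t ≠ p := hpe t ht'.1
        omega
      obtain ⟨c, hc⟩ := hm2dvd
      have hmeq : m = m₁ + 2 ^ p * (2 * c) := by
        rw [hmsum, ← hsplit, hc, pow_succ]; ring
      rw [hmeq, Nat.add_mul_div_left _ _ (by positivity : (0:ℕ) < 2 ^ p),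
        Nat.div_eq_of_lt hm1lt] at hbit
      omega

end Stmt15Aux

theorem stmt15 :
    ∃ F : Set ℕ, AIPstar F ∧ ∀ n : ℕ, 1 ≤ n → ¬ AIPstar {m : ℕ | m + n ∈ F} := by
  refine ⟨{m : ℕ | m ∉ Stmt15Aux.badU}, Stmt15Aux.F_IPstar, ?_⟩
  intro n hn hA
  obtain ⟨m, hmF, hmFS⟩ := hA (fun t => 2 ^ (2 ^ (n + 1) * (2 * t + 1)))
  exact hmF (Stmt15Aux.translate_bad hn hmFS)
end

section
/- Let q ≥ 2, let B be a multiplicative IP* set written as B = q^C ∪ D, where q^E = { q^e : e ∈ E } for E ⊆ ℕ, C = { n : q^n ∈ B } and q^C ∩ D = ∅, and let E ⊆ C be an additive IP* set. Then q^E ∪ D is also a multiplicative IP* set. -/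
open scoped BigOperators

theorem stmt16 (q : ℕ) (hq : 2 ≤ q) (B C D E : Set ℕ) (hB : MIPstar B)
    (hC : C = {n : ℕ | q ^ n ∈ B}) (hBdecomp : B = (fun n => q ^ n) '' C ∪ D)
    (hdisj : ((fun n => q ^ n) '' C) ∩ D = ∅)
    (hE : E ⊆ C) (hEstar : AIPstar E) :
    MIPstar ((fun n => q ^ n) '' E ∪ D) := by

  intro x hxinj hx2
  by_cases hD : (D ∩ FP x).Nonempty
  · obtain ⟨b, hbD, hbFP⟩ := hD
    exact ⟨b, Or.inr hbD, hbFP⟩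
  · have hDempty : ∀ b ∈ FP x, b ∉ D := fun b hb hbD => hD ⟨b, hbD, hb⟩
    have step : ∀ m : ℕ, ∃ (H : Finset ℕ) (c : ℕ),
        H.Nonempty ∧ (∀ i ∈ H, m ≤ i) ∧ c ∈ C ∧ ∏ i ∈ H, x i = q ^ c := by
      intro m
      obtain ⟨b, hbB, H', hH'ne, hbeq⟩ :=
        hB (fun n => x (n + m)) (fun a b h => by have := hxinj h; omega)
          (fun n => hx2 _)
      set H := H'.image (· + m) with hHdef
      have hprod : ∏ i ∈ H, x i = b := by
        rw [hHdef, Finset.prod_image (fun a _ b _ h => by omega)]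
        exact hbeq.symm
      have hbFP : b ∈ FP x := ⟨H, hH'ne.image _, hprod.symm⟩
      have hbim : b ∈ (fun n => q ^ n) '' C := by
        rw [hBdecomp] at hbB
        rcases hbB with h | h
        · exact h
        · exact absurd h (hDempty b hbFP)
      obtain ⟨c, hcC, hcq⟩ := hbim
      refine ⟨H, c, hH'ne.image _, ?_, hcC, by rw [hprod, ← hcq]⟩
      intro i hi
      simp only [hHdef, Finset.mem_image] at hi
      obtain ⟨a, _, rfl⟩ := hi
      omega
    choose Hf cf hne hge hcC hprodeq using step
    set bd : ℕ → ℕ := fun k => Nat.rec 0 (fun _ b => (Hf b).sup id + 1) k with hbd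
    have hbdsucc : ∀ k, bd (k + 1) = (Hf (bd k)).sup id + 1 := fun k => rfl
    have hsep : ∀ k, ∀ i ∈ Hf (bd k), i < bd (k + 1) := by
      intro k i hi
      have : i ≤ (Hf (bd k)).sup id := Finset.le_sup (f := id) hi
      rw [hbdsucc]; omega
    have hmono : ∀ k l, k ≤ l → bd k ≤ bd l := by
      intro k l h
      induction l with
      | zero => have : k = 0 := by omega
                subst this; exact le_refl _
      | succ n ih =>
        rcases Nat.lt_or_ge k (n + 1) with h' | h'
        · have h1 : bd k ≤ bd n := ih (by omega)
          obtain ⟨i, hi⟩ := hne (bd n)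
          have h2 := hge (bd n) i hi
          have h3 := hsep n i hi
          omega
        · have : k = n + 1 := by omega
          subst this; exact le_refl _
    have horder : ∀ s t, s < t → ∀ i ∈ Hf (bd s), ∀ j ∈ Hf (bd t), i < j := by
      intro s t hst i hi j hj
      have h1 := hsep s i hi
      have h2 := hge (bd t) j hj
      have h3 := hmono (s + 1) t hst
      omega
    obtain ⟨n, hnE, K, hKne, hnsum⟩ := hEstar (fun t => cf (bd t))
    have hdisjK : (↑K : Set ℕ).PairwiseDisjoint (fun t => Hf (bd t)) := by
      intro s _ t _ hst
      rcases Nat.lt_or_ge s t with h | h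
      · exact Finset.disjoint_left.mpr fun a ha ha' =>
          absurd (horder s t h a ha a ha') (by omega)
      · exact Finset.disjoint_left.mpr fun a ha ha' =>
          absurd (horder t s (by omega) a ha' a ha) (by omega)
    refine ⟨q ^ n, Or.inl ⟨n, hnE, rfl⟩, K.biUnion (fun t => Hf (bd t)), ?_, ?_⟩
    · obtain ⟨t, ht⟩ := hKne
      obtain ⟨i, hi⟩ := hne (bd t)
      exact ⟨i, Finset.mem_biUnion.mpr ⟨t, ht, hi⟩⟩
    · rw [Finset.prod_biUnion hdisjK, hnsum]
      simp only [hprodeq]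
      rw [← Finset.prod_pow_eq_pow_sum]
end

section
/- Let q be a prime. For every multiplicative IP* set B ⊆ ℕ there exists a multiplicative IP* set A ⊆ B such that for all n ≥ 1, the set A / q^n = { m : m · q^n ∈ A } is not a multiplicative IP* set. -/
open scoped BigOperators

-- helper lemmas

open Finset in
private lemma sum_two_pow (n : ℕ) : ∑ i ∈ Finset.range n, 2^i = 2^n - 1 := by
  induction n with
  | zero => simp
  | succ n ih =>
    rw [Finset.sum_range_succ, ih]
    have : 1 ≤ 2^n := Nat.one_le_two_pow
    have : 2^(n+1) = 2^n + 2^n := by ring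
    omega

private lemma dvd_of_bits_ge {s c : ℕ} (h : ∀ p, s.testBit p = true → c ≤ p) : 2^c ∣ s := by
  apply Nat.dvd_of_mod_eq_zero
  apply Nat.eq_of_testBit_eq
  intro i
  rw [Nat.testBit_mod_two_pow, Nat.zero_testBit]
  cases hb : s.testBit i with
  | false => simp
  | true => have := h i hb; simp [Nat.not_lt.mpr this]

private lemma div_add_of_dvd {low s c p : ℕ} (hlow : low < 2^c) (hs : 2^c ∣ s) (hcp : c ≤ p) :
    (low + s) / 2^p = s / 2^p := by
  obtain ⟨k, rfl⟩ := hs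
  have h1 : (low + 2^c * k) / 2^c = k := by
    rw [mul_comm, Nat.add_mul_div_right _ _ (Nat.two_pow_pos c), Nat.div_eq_of_lt hlow]
    omega
  have hp : p = c + (p - c) := by omega
  rw [hp, pow_add, ← Nat.div_div_eq_div_mul, ← Nat.div_div_eq_div_mul, h1,
    Nat.mul_div_cancel_left _ (Nat.two_pow_pos c)]

private lemma testBit_add_high {low s c p : ℕ} (hlow : low < 2^c) (hs : 2^c ∣ s) (hcp : c ≤ p) :
    (low + s).testBit p = s.testBit p := by
  rw [Nat.testBit_eq_decide_div_mod_eq, Nat.testBit_eq_decide_div_mod_eq, div_add_of_dvd hlow hs hcp]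

private lemma testBit_add_low {low s c p : ℕ} (hs : 2^c ∣ s) (hpc : p < c) :
    (low + s).testBit p = low.testBit p := by
  obtain ⟨k, rfl⟩ := hs
  have h2 : 2^c * k = 2^p * (2 * (2^(c-p-1) * k)) := by
    rw [← mul_assoc, ← mul_assoc]
    congr 2
    rw [← pow_succ, ← pow_add]
    congr 1
    omega
  rw [Nat.testBit_eq_decide_div_mod_eq, Nat.testBit_eq_decide_div_mod_eq, h2, mul_comm (2^p),
    Nat.add_mul_div_right _ _ (Nat.two_pow_pos p), Nat.add_mul_mod_self_left]

private lemma testBit_shift {u c k : ℕ} : (2^c * u).testBit (c + k) = u.testBit k := by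
  have : 2^c * u / 2^(c+k) = u / 2^k := by
    rw [pow_add, ← Nat.div_div_eq_div_mul, Nat.mul_div_cancel_left _ (Nat.two_pow_pos c)]
  rw [Nat.testBit_eq_decide_div_mod_eq, Nat.testBit_eq_decide_div_mod_eq, this]

private lemma testBit_odd_mul {o k : ℕ} (ho : Odd o) : (2^k * o).testBit k = true := by
  have : (2^k * o).testBit (k + 0) = o.testBit 0 := testBit_shift
  simpa [Nat.testBit_zero, Nat.odd_iff.mp ho] using this

private lemma val_unique {a b i j : ℕ} (h : 2^a * (2*i+1) = 2^b * (2*j+1)) : a = b := by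
  rcases lt_trichotomy a b with hab | hab | hab
  · exfalso
    have hb : (2:ℕ)^b = 2^a * 2^(b-a) := by rw [← pow_add]; congr 1; omega
    rw [hb, mul_assoc] at h
    have h2 := Nat.eq_of_mul_eq_mul_left (Nat.two_pow_pos a) h
    have : (2:ℕ) ∣ 2^(b-a) * (2*j+1) := Dvd.dvd.mul_right (dvd_pow_self 2 (by omega)) _
    omega
  · exact hab
  · exfalso
    have hb : (2:ℕ)^a = 2^b * 2^(a-b) := by rw [← pow_add]; congr 1; omega
    rw [hb, mul_assoc] at h
    have h2 := Nat.eq_of_mul_eq_mul_left (Nat.two_pow_pos b) h.symm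
    have : (2:ℕ) ∣ 2^(a-b) * (2*i+1) := Dvd.dvd.mul_right (dvd_pow_self 2 (by omega)) _
    omega

private lemma bits_of_sum_pows {e : ℕ → ℕ} (he : StrictMono e) (H : Finset ℕ) :
    ∀ p, ((∑ t ∈ H, 2^(e t)).testBit p = true) → ∃ t ∈ H, p = e t := by
  induction H using Finset.induction_on_max with
  | empty => intro p hp; rw [Finset.sum_empty, Nat.zero_testBit] at hp; exact absurd hp (by simp)
  | insert a s hmax ih =>
    intro p hp
    have has : a ∉ s := fun h => lt_irrefl a (hmax a h)
    rw [Finset.sum_insert has] at hp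
    have hSle : ∑ t ∈ s, 2^(e t) ≤ 2^(e a) - 1 := by
      have h1 : ∑ t ∈ s, 2^(e t) = ∑ i ∈ s.image e, 2^i :=
        (Finset.sum_image (fun x _ y _ hxy => he.injective hxy)).symm
      have h2 : s.image e ⊆ Finset.range (e a) := by
        intro i hi
        obtain ⟨t, ht, rfl⟩ := Finset.mem_image.mp hi
        exact Finset.mem_range.mpr (he (hmax t ht))
      calc ∑ t ∈ s, 2^(e t) = ∑ i ∈ s.image e, 2^i := h1
        _ ≤ ∑ i ∈ Finset.range (e a), 2^i := Finset.sum_le_sum_of_subset h2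
        _ = 2^(e a) - 1 := sum_two_pow _
    rcases lt_trichotomy p (e a) with hpa | hpa | hpa
    · rw [add_comm, testBit_add_low (dvd_refl _) hpa] at hp
      obtain ⟨t, ht, rfl⟩ := ih p hp
      exact ⟨t, Finset.mem_insert_of_mem ht, rfl⟩
    · exact ⟨a, Finset.mem_insert_self a s, by omega⟩
    · exfalso
      have hlt : 2^(e a) + ∑ t ∈ s, 2^(e t) < 2^p := by
        have : 2^(e a) + 2^(e a) ≤ 2^p := by
          have : (2:ℕ)^(e a) * 2 ≤ 2^p := by
            rw [← pow_succ]
            exact Nat.pow_le_pow_right (by norm_num) (by omega)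
          omega
        have h1 : 1 ≤ 2^(e a) := Nat.one_le_two_pow
        omega
      rw [Nat.testBit_eq_false_of_lt hlt] at hp
      exact absurd hp (by simp)

def Gset : Set ℕ :=
  {m | ∃ n s : ℕ, 1 ≤ n ∧ 1 ≤ s ∧ m = n + s ∧ ∀ p, s.testBit p = true → ∃ j, p = 2^n * (2*j+1)}

private lemma tag_dvd {n s : ℕ}
    (hsupp : ∀ p, s.testBit p = true → ∃ j, p = 2^n * (2*j+1)) : 2^(2^n) ∣ s := by
  apply dvd_of_bits_ge
  intro p hp
  obtain ⟨j, rfl⟩ := hsupp p hp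
  calc 2^n = 2^n * 1 := by ring
    _ ≤ 2^n * (2*j+1) := Nat.mul_le_mul_left _ (by omega)

private lemma exists_FS_not_G (b : ℕ → ℕ) (hb : ∀ t, 1 ≤ b t) :
    ∃ k, k ∈ FS b ∧ k ∉ Gset := by
  by_contra hcon
  push_neg at hcon
  have h : ∀ k, k ∈ FS b → k ∈ Gset := fun k hk => hcon k hk
  set m₁ := b 0 with hm₁def
  have hm₁ : 1 ≤ m₁ := hb 0
  set E := m₁ + 1 with hEdef
  have hm₁E : m₁ < 2^E := lt_of_lt_of_le ((Nat.lt_two_pow_self (n := m₁))) (Nat.pow_le_pow_right (by norm_num) (by omega))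
  have hEpos : 0 < (2:ℕ)^E := Nat.two_pow_pos _
  -- pigeonhole: find a block sum divisible by 2^E
  set P : ℕ → ℕ := fun j => ∑ t ∈ Finset.range j, b (t+1) with hPdef
  obtain ⟨x, hx, y, hy, hxy, hfxy⟩ :=
    Finset.exists_ne_map_eq_of_card_lt_of_maps_to
      (s := Finset.range (2^E + 1)) (t := Finset.range (2^E))
      (by simp) (f := fun j => P j % 2^E)
      (fun a _ => Finset.mem_range.mpr (Nat.mod_lt _ hEpos))
  wlog hxy' : x < y generalizing x y
  · exact this y hy x hx hxy.symm hfxy.symm (by omega)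
  set M := ∑ t ∈ Finset.Ico x y, b (t+1) with hMdef
  have hPM : P x + M = P y := by
    rw [hPdef]
    simp only [Finset.range_eq_Ico]
    exact Finset.sum_Ico_consecutive _ (Nat.zero_le x) (le_of_lt hxy')
  have hdvdM : 2^E ∣ M := by
    have h1 : P x + M ≡ P x + 0 [MOD 2^E] := by
      rw [hPM, Nat.add_zero]
      exact hfxy.symm
    exact Nat.modEq_zero_iff_dvd.mp (Nat.ModEq.add_left_cancel' _ h1)
  have hM1 : 1 ≤ M := by
    have : b (x+1) ≤ M :=
      Finset.single_le_sum (f := fun t => b (t+1)) (fun i _ => Nat.zero_le _)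
        (Finset.mem_Ico.mpr ⟨le_refl x, hxy'⟩)
    have := hb (x+1); omega
  -- FS memberships
  set H₂ := (Finset.Ico x y).image (· + 1) with hH₂def
  have hH₂sum : ∑ t ∈ H₂, b t = M := by
    rw [hH₂def]
    exact Finset.sum_image (fun a _ c _ hac => by omega)
  have hH₂ne : H₂.Nonempty := (Finset.nonempty_Ico.mpr hxy').image _
  have h0H₂ : 0 ∉ H₂ := by
    rw [hH₂def]
    intro h0
    obtain ⟨a, _, ha⟩ := Finset.mem_image.mp h0
    omega
  have hMFS : M ∈ FS b := ⟨H₂, hH₂ne, hH₂sum.symm⟩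
  have hm₃FS : m₁ + M ∈ FS b := by
    refine ⟨insert 0 H₂, Finset.insert_nonempty _ _, ?_⟩
    rw [Finset.sum_insert h0H₂, hH₂sum]
  obtain ⟨n₂, s₂, hn₂1, hs₂1, he₂, hsupp₂⟩ := h M hMFS
  obtain ⟨n₃, s₃, hn₃1, hs₃1, he₃, hsupp₃⟩ := h (m₁ + M) hm₃FS
  have F2a : 2^(2^n₂) ∣ s₂ := tag_dvd hsupp₂
  have F3a : 2^(2^n₃) ∣ s₃ := tag_dvd hsupp₃
  have n₂lt : n₂ < 2^n₂ := Nat.lt_two_pow_self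
  have n₃lt : n₃ < 2^n₃ := Nat.lt_two_pow_self
  have n₃lt2 : n₃ < 2^(2^n₃) :=
    lt_of_lt_of_le n₃lt (Nat.pow_le_pow_right (by norm_num) (le_of_lt n₃lt))
  -- facts about n₂ from 2^E ∣ M
  have hEn₂ : E < 2^n₂ := by
    by_contra hle
    push_neg at hle
    have h1 : 2^(2^n₂) ∣ M := dvd_trans (pow_dvd_pow 2 hle) hdvdM
    have h2 : 2^(2^n₂) ∣ n₂ := by
      have h2' := Nat.dvd_sub h1 F2a
      have he : M - s₂ = n₂ := by omega
      rwa [he] at h2'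
    have h3 : 2^(2^n₂) ≤ n₂ := Nat.le_of_dvd (by omega) h2
    have h4 : 2^n₂ ≤ 2^(2^n₂) := Nat.pow_le_pow_right (by norm_num) (le_of_lt n₂lt)
    omega
  have hdvds₂E : 2^E ∣ s₂ := dvd_trans (pow_dvd_pow 2 (le_of_lt hEn₂)) F2a
  have hdvdn₂E : 2^E ∣ n₂ := by
    have h2' := Nat.dvd_sub hdvdM hdvds₂E
    have he : M - s₂ = n₂ := by omega
    rwa [he] at h2'
  by_cases hnn : n₂ = n₃
  · -- equal tags: m₁ ≡ 0 mod 2^E, contradiction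
    have hdvdn₃E : 2^E ∣ n₃ := hnn ▸ hdvdn₂E
    have hdvds₃E : 2^E ∣ s₃ := dvd_trans (pow_dvd_pow 2 (le_of_lt (hnn ▸ hEn₂))) F3a
    have : 2^E ∣ m₁ := by
      have h2' := Nat.dvd_sub (dvd_add hdvdn₃E hdvds₃E) (dvd_add hdvdn₂E hdvds₂E)
      have he : (n₃ + s₃) - (n₂ + s₂) = m₁ := by omega
      rwa [he] at h2'
    have := Nat.le_of_dvd (by omega) this
    omega
  · -- different tags
    obtain ⟨v₂, o₂, ho₂, hs₂eq⟩ := Nat.exists_eq_two_pow_mul_odd (n := s₂) (by omega)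
    have htb₂ : s₂.testBit v₂ = true := by rw [hs₂eq]; exact testBit_odd_mul ho₂
    obtain ⟨a2, hv₂⟩ := hsupp₂ v₂ htb₂
    have hv₂ge : 2^n₂ ≤ v₂ := by
      rw [hv₂]
      calc 2^n₂ = 2^n₂ * 1 := by ring
        _ ≤ 2^n₂ * (2*a2+1) := Nat.mul_le_mul_left _ (by omega)
    have hdv₂s₂ : 2^v₂ ∣ s₂ := ⟨o₂, hs₂eq⟩
    -- w = m₁ + n₂ < 2^(2^n₂)
    have hw : m₁ + n₂ < 2^(2^n₂) := by
      have h1 : E ≤ 2^n₂ - 1 := by omega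
      have h2 : m₁ < 2^(2^n₂ - 1) :=
        lt_of_lt_of_le hm₁E (Nat.pow_le_pow_right (by norm_num) h1)
      have h3 : n₂ < 2^(2^n₂ - 1) :=
        lt_of_lt_of_le n₂lt (Nat.pow_le_pow_right (by norm_num) (by omega))
      have h4 : 2^(2^n₂ - 1) + 2^(2^n₂ - 1) = 2^(2^n₂) := by
        rw [← two_mul, ← pow_succ']
        congr 1
        have : 1 ≤ 2^n₂ := Nat.one_le_two_pow
        omega
      omega
    have hkey : n₃ + s₃ = (m₁ + n₂) + s₂ := by omega
    rcases lt_or_gt_of_ne hnn with hlt | hlt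
    · -- n₂ < n₃ : α = 2^n₃ > β = 2^n₂
      have hba : 2^n₂ ≤ 2^n₃ := Nat.pow_le_pow_right (by norm_num) (le_of_lt hlt)
      set r := s₂ % 2^(2^n₃) with hrdef
      set u := s₂ / 2^(2^n₃) with hudef
      have hru : r + 2^(2^n₃) * u = s₂ := Nat.mod_add_div s₂ (2^(2^n₃))
      have hrlt : r < 2^(2^n₃) := Nat.mod_lt _ (Nat.two_pow_pos _)
      have hβα : (2:ℕ)^(2^n₂) ∣ 2^(2^n₃) := pow_dvd_pow 2 hba
      have hβr : 2^(2^n₂) ∣ r := (Nat.dvd_mod_iff hβα).mpr F2a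
      have hwr : m₁ + n₂ + r < 2^(2^n₃) := by
        obtain ⟨t, hrt⟩ := hβr
        have ht1 : 2^(2^n₂) * (t+1) ≤ 2^(2^n₂) * 2^(2^n₃ - 2^n₂) := by
          apply Nat.mul_le_mul_left
          have h5 : 2^(2^n₂) * t < 2^(2^n₂) * 2^(2^n₃ - 2^n₂) := by
            rw [← pow_add]
            have : 2^n₂ + (2^n₃ - 2^n₂) = 2^n₃ := by omega
            rw [this, ← hrt]
            exact hrlt
          exact Nat.lt_of_mul_lt_mul_left h5
        have ht2 : (2:ℕ)^(2^n₂) * 2^(2^n₃ - 2^n₂) = 2^(2^n₃) := by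
          rw [← pow_add]
          congr 1
          omega
        have : 2^(2^n₂) * t + 2^(2^n₂) ≤ 2^(2^n₃) := by
          rw [← ht2]
          calc 2^(2^n₂) * t + 2^(2^n₂) = 2^(2^n₂) * (t+1) := by ring
            _ ≤ _ := ht1
        omega
      obtain ⟨k3, hk3⟩ := F3a
      have hn₃val : n₃ = m₁ + n₂ + r := by
        have heq2 : n₃ + 2^(2^n₃) * k3 = (m₁ + n₂ + r) + 2^(2^n₃) * u := by
          rw [← hk3]
          omega
        have hmod := congrArg (· % 2^(2^n₃)) heq2
        simp only [Nat.add_mul_mod_self_left] at hmod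
        rwa [Nat.mod_eq_of_lt n₃lt2, Nat.mod_eq_of_lt hwr] at hmod
      have hs₃u : s₃ = 2^(2^n₃) * u := by
        have h9 := hkey
        rw [← hru] at h9
        omega
      have hu1 : u ≠ 0 := by
        intro h0
        rw [h0, Nat.mul_zero] at hs₃u
        omega
      obtain ⟨k, o, ho, hueq⟩ := Nat.exists_eq_two_pow_mul_odd hu1
      have htbu : u.testBit k = true := by rw [hueq]; exact testBit_odd_mul ho
      have htbs₂ : s₂.testBit (2^n₃ + k) = true := by
        rw [← hru]
        rw [testBit_add_high hrlt (Dvd.intro u rfl) (Nat.le_add_right _ _)]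
        rw [testBit_shift]
        exact htbu
      have htbs₃ : s₃.testBit (2^n₃ + k) = true := by
        rw [hs₃u, testBit_shift]
        exact htbu
      obtain ⟨j2, hj2⟩ := hsupp₂ _ htbs₂
      obtain ⟨j3, hj3⟩ := hsupp₃ _ htbs₃
      exact hnn (val_unique (hj2 ▸ hj3))
    · -- n₃ < n₂
      have hba : 2^n₃ ≤ 2^n₂ := Nat.pow_le_pow_right (by norm_num) (le_of_lt hlt)
      have hαs₂ : 2^(2^n₃) ∣ s₂ := dvd_trans (pow_dvd_pow 2 hba) F2a
      obtain ⟨k3, hk3⟩ := F3a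
      obtain ⟨k2, hk2⟩ := hαs₂
      have hn₃val : n₃ = (m₁ + n₂) % 2^(2^n₃) := by
        have heq2 : n₃ + 2^(2^n₃) * k3 = (m₁ + n₂) + 2^(2^n₃) * k2 := by
          rw [← hk3, ← hk2]
          omega
        have hmod := congrArg (· % 2^(2^n₃)) heq2
        simp only [Nat.add_mul_mod_self_left] at hmod
        rwa [Nat.mod_eq_of_lt n₃lt2] at hmod
      have hn₃le : n₃ ≤ m₁ + n₂ := hn₃val ▸ Nat.mod_le _ _
      have hs₃eq' : s₃ = (m₁ + n₂ - n₃) + s₂ := by omega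
      have hlowlt : m₁ + n₂ - n₃ < 2^v₂ := by
        have : (2:ℕ)^(2^n₂) ≤ 2^v₂ := Nat.pow_le_pow_right (by norm_num) hv₂ge
        omega
      have htbs₃ : s₃.testBit v₂ = true := by
        rw [hs₃eq', testBit_add_high hlowlt hdv₂s₂ (le_refl _)]
        exact htb₂
      obtain ⟨j3, hj3⟩ := hsupp₃ v₂ htbs₃
      exact hnn (val_unique (hv₂ ▸ hj3))

private lemma FP_to_finset {a : Stream' ℕ} {m : ℕ} (hm : m ∈ Hindman.FP a) :
    ∃ H : Finset ℕ, H.Nonempty ∧ m = ∏ t ∈ H, a.get t := by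
  induction hm with
  | head' a => exact ⟨{0}, Finset.singleton_nonempty 0, by simp [Stream'.head]⟩
  | tail' a m h ih =>
    obtain ⟨H, hne, hprod⟩ := ih
    refine ⟨H.image (· + 1), hne.image _, ?_⟩
    rw [Finset.prod_image (fun x _ y _ h => by omega)]
    rw [hprod]
    rfl
  | cons' a m h ih =>
    obtain ⟨H, hne, hprod⟩ := ih
    have h0 : 0 ∉ H.image (· + 1) := by
      intro h0
      obtain ⟨t, _, ht⟩ := Finset.mem_image.mp h0
      omega
    refine ⟨insert 0 (H.image (· + 1)), Finset.insert_nonempty _ _, ?_⟩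
    rw [Finset.prod_insert h0, Finset.prod_image (fun x _ y _ h => by omega), hprod]
    rfl

private lemma prod_ge_two {x : ℕ → ℕ} (hx2 : ∀ n, 2 ≤ x n) {H : Finset ℕ} (hne : H.Nonempty) :
    2 ≤ ∏ t ∈ H, x t := by
  obtain ⟨t0, ht0⟩ := hne
  calc 2 ≤ x t0 := hx2 t0
    _ ≤ ∏ t ∈ H, x t := Finset.single_le_prod' (fun i _ => le_trans (by norm_num) (hx2 i)) ht0

private lemma FP_elem_ge {x : ℕ → ℕ} (hx2 : ∀ n, 2 ≤ x n) {m : ℕ}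
    (hm : m ∈ Hindman.FP (x : Stream' ℕ)) : 2 ≤ m := by
  obtain ⟨H, hne, rfl⟩ := FP_to_finset hm
  exact prod_ge_two hx2 hne

private lemma exists_good_sub (a : Stream' ℕ) (ha : ∀ t, 2 ≤ a.get t) :
    ∃ x' : ℕ → ℕ, StrictMono x' ∧ (∀ t, 2 ≤ x' t) ∧
      ∀ H : Finset ℕ, H.Nonempty → (∏ t ∈ H, x' t) ∈ Hindman.FP a := by
  let h : ℕ → ℕ × ℕ := fun t =>
    Nat.rec (0, 1) (fun _ p => (p.1 + p.2, (∏ i ∈ Finset.Ico p.1 (p.1 + p.2), a.get i) + 1)) t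
  let g : ℕ → ℕ := fun t => (h t).1
  let len : ℕ → ℕ := fun t => (h t).2
  have hg : ∀ t, g (t+1) = g t + len t := fun t => rfl
  have hlen : ∀ t, 1 ≤ len t := by
    intro t
    cases t with
    | zero => exact le_refl 1
    | succ t => simp only [len, h]; omega
  set x' : ℕ → ℕ := fun t => ∏ i ∈ Finset.Ico (g t) (g (t+1)), a.get i with hx'def
  have hlensucc : ∀ t, len (t+1) = x' t + 1 := fun t => rfl
  have hIcone : ∀ t, (Finset.Ico (g t) (g (t+1))).Nonempty := by
    intro t
    rw [hg t]
    exact Finset.nonempty_Ico.mpr (by have := hlen t; omega)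
  have hx'2 : ∀ t, 2 ≤ x' t := by
    intro t
    exact prod_ge_two (fun n => ha n) (hIcone t)
  have hx'mono : StrictMono x' := by
    apply strictMono_nat_of_lt_succ
    intro t
    have hcard : (Finset.Ico (g (t+1)) (g (t+2))).card = len (t+1) := by
      rw [Nat.card_Ico, hg (t+1)]
      omega
    have hpow : (2:ℕ)^(len (t+1)) ≤ ∏ i ∈ Finset.Ico (g (t+1)) (g (t+2)), a.get i := by
      rw [← hcard]
      exact Finset.pow_card_le_prod _ _ _ (fun i _ => ha i)
    have h2 : x' t < 2^(x' t + 1) :=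
      lt_of_lt_of_le Nat.lt_two_pow_self (Nat.pow_le_pow_right (by norm_num) (by omega))
    calc x' t < 2^(x' t + 1) := h2
      _ = 2^(len (t+1)) := by rw [hlensucc]
      _ ≤ x' (t+1) := hpow
  have hgmono : Monotone g := by
    apply monotone_nat_of_le_succ
    intro t
    rw [hg t]
    omega
  refine ⟨x', hx'mono, hx'2, ?_⟩
  intro H hne
  have hdisj : ∀ s ∈ H, ∀ t ∈ H, s ≠ t →
      Disjoint (Finset.Ico (g s) (g (s+1))) (Finset.Ico (g t) (g (t+1))) := by
    intro s _ t _ hst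
    rw [Finset.disjoint_left]
    intro i hi1 hi2
    rw [Finset.mem_Ico] at hi1 hi2
    rcases lt_or_gt_of_ne hst with hlt | hlt
    · have hle : g (s+1) ≤ g t := hgmono (by omega : s+1 ≤ t)
      omega
    · have hle : g (t+1) ≤ g s := hgmono (by omega : t+1 ≤ s)
      omega
  have hprod : ∏ t ∈ H, x' t = ∏ i ∈ H.biUnion (fun t => Finset.Ico (g t) (g (t+1))), a.get i :=
    (Finset.prod_biUnion hdisj).symm
  rw [hprod]
  apply Hindman.FP.finset_prod
  obtain ⟨t0, ht0⟩ := hne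
  refine ⟨g t0, Finset.mem_biUnion.mpr ⟨t0, ht0, Finset.mem_Ico.mpr ?_⟩⟩
  have := hlen t0
  rw [hg t0]
  omega

def Sset (q : ℕ) : Set ℕ := {m | ∀ k, 1 ≤ k → m = q^k → k ∉ Gset}

private lemma MIP_inter (q : ℕ) (hq2 : 2 ≤ q) (B : Set ℕ) (hB : MIPstar B) :
    MIPstar (B ∩ Sset q) := by
  intro x hinj hx2
  have cover : Hindman.FP (x : Stream' ℕ) ⊆
      ⋃₀ {Sset q ∩ Hindman.FP (x : Stream' ℕ), (Sset q)ᶜ ∩ Hindman.FP (x : Stream' ℕ)} := by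
    intro m hm
    by_cases hmS : m ∈ Sset q
    · exact ⟨_, Set.mem_insert _ _, hmS, hm⟩
    · exact ⟨_, Set.mem_insert_of_mem _ rfl, hmS, hm⟩
  have sfin : ({Sset q ∩ Hindman.FP (x : Stream' ℕ), (Sset q)ᶜ ∩ Hindman.FP (x : Stream' ℕ)} :
      Set (Set ℕ)).Finite := (Set.finite_singleton _).insert _
  obtain ⟨c, hc, a', hFPa'⟩ := Hindman.FP_partition_regular _ _ sfin cover
  rcases Set.mem_insert_iff.mp hc with hc | hc
  · -- good cell
    subst hc
    have ha'2 : ∀ t, 2 ≤ a'.get t := fun t =>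
      FP_elem_ge hx2 ((hFPa' (Hindman.FP.singleton a' t)).2)
    obtain ⟨x', hmono, hx'2, hx'FP⟩ := exists_good_sub a' ha'2
    obtain ⟨m, hmB, H, hne, rfl⟩ := hB x' hmono.injective hx'2
    have hmem := hFPa' (hx'FP H hne)
    obtain ⟨HH, hHne, heq⟩ := FP_to_finset hmem.2
    exact ⟨_, ⟨hmB, hmem.1⟩, HH, hHne, heq⟩
  · -- bad cell: impossible
    exfalso
    rw [Set.mem_singleton_iff] at hc
    subst hc
    have hterm : ∀ t, ∃ k, 1 ≤ k ∧ a'.get t = q^k ∧ k ∈ Gset := by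
      intro t
      have h2 : a'.get t ∈ (Sset q)ᶜ := (hFPa' (Hindman.FP.singleton a' t)).1
      simp only [Sset, Set.mem_compl_iff, Set.mem_setOf_eq] at h2
      push_neg at h2
      obtain ⟨k, hk1, hk2, hk3⟩ := h2
      exact ⟨k, hk1, hk2, hk3⟩
    choose bf hb1 hbeq hbG using hterm
    obtain ⟨k, ⟨H, hne, hsum⟩, hkG⟩ := exists_FS_not_G bf hb1
    have hprod : ∏ t ∈ H, a'.get t = q^k := by
      rw [hsum, ← Finset.prod_pow_eq_pow_sum]
      exact Finset.prod_congr rfl (fun t _ => hbeq t)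
    have hmem := (hFPa' (Hindman.FP.finset_prod a' H hne)).1
    rw [hprod] at hmem
    simp only [Sset, Set.mem_compl_iff, Set.mem_setOf_eq] at hmem
    push_neg at hmem
    obtain ⟨k', hk'1, hk'2, hk'3⟩ := hmem
    have : k = k' := Nat.pow_right_injective hq2 hk'2
    exact hkG (this ▸ hk'3)

theorem stmt17 (q : ℕ) (hq : Nat.Prime q) (B : Set ℕ) (hB : MIPstar B) :
    ∃ A : Set ℕ, A ⊆ B ∧ MIPstar A ∧
      ∀ n : ℕ, 1 ≤ n → ¬ MIPstar {m : ℕ | m * q ^ n ∈ A} := by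
  have hq2 : 2 ≤ q := hq.two_le
  refine ⟨B ∩ Sset q, Set.inter_subset_left, MIP_inter q hq2 B hB, ?_⟩
  intro n hn hM
  set e : ℕ → ℕ := fun t => 2^n * (2*t+1) with hedef
  have he : StrictMono e := by
    intro s t hst
    simp only [hedef]
    exact (mul_lt_mul_iff_right₀ (show 0 < (2:ℕ)^n from Nat.two_pow_pos _)).mpr (by omega)
  set y : ℕ → ℕ := fun t => 2^(e t) with hydef
  have hymono : StrictMono y := fun s t h => Nat.pow_lt_pow_right (by norm_num) (he h)
  set xx : ℕ → ℕ := fun t => q^(y t) with hxxdef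
  have hxmono : StrictMono xx := fun s t h => Nat.pow_lt_pow_right hq.one_lt (hymono h)
  have hy1 : ∀ t, 1 ≤ y t := fun t => Nat.one_le_two_pow
  have hx2 : ∀ t, 2 ≤ xx t := by
    intro t
    calc 2 ≤ q := hq2
      _ ≤ q^(y t) := Nat.le_self_pow (by have := hy1 t; omega) q
  obtain ⟨m, hmA, H, hne, rfl⟩ := hM xx hxmono.injective hx2
  set K := ∑ t ∈ H, y t with hKdef
  have hprod : ∏ t ∈ H, xx t = q^K := Finset.prod_pow_eq_pow_sum H y q
  have hK1 : 1 ≤ K := by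
    obtain ⟨t0, ht0⟩ := hne
    have h1 : y t0 ≤ K := Finset.single_le_sum (fun i _ => Nat.zero_le _) ht0
    have := hy1 t0
    omega
  have hmS : q^(K+n) ∈ Sset q := by
    have h1 : (∏ t ∈ H, xx t) * q^n ∈ B ∩ Sset q := hmA
    rw [hprod, ← pow_add] at h1
    exact h1.2
  have hGmem : K + n ∈ Gset := by
    refine ⟨n, K, hn, hK1, by omega, ?_⟩
    intro p hp
    obtain ⟨t, _, rfl⟩ := bits_of_sum_pows he H p hp
    exact ⟨t, rfl⟩
  exact hmS (K+n) (by omega) rfl hGmem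
end

section
/- If B ⊆ ℕ is a dynamical multiplicative IP* set, then for all but a 'small' exceptional set there exists a dynamical multiplicative IP* set C ⊆ B such that for each n ∈ C, the set C / n = { m : m·n ∈ C } is a dynamical multiplicative IP* set. -/
open scoped BigOperators

theorem stmt18 (B : Set ℕ) (hB : DynMIPstar B) :
    ∃ C : Set ℕ, C ⊆ B ∧ DynMIPstar C ∧
      ∀ n ∈ C, DynMIPstar {m : ℕ | m * n ∈ C} := by
  obtain ⟨X, mX, μ, hμ, T, hmp, hTmul, A, hA, hApos, hsub⟩ := hB
  refine ⟨{s | 0 < μ (A ∩ T s ⁻¹' A)}, hsub,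
    ⟨X, mX, μ, hμ, T, hmp, hTmul, A, hA, hApos, subset_rfl⟩, ?_⟩
  intro n hn
  refine ⟨X, mX, μ, hμ, T, hmp, hTmul,
    A ∩ T n ⁻¹' A, hA.inter ((hmp n).measurable hA), hn, ?_⟩
  intro m hm
  refine lt_of_lt_of_le hm (μ.mono ?_)
  rintro x ⟨⟨hxA, -⟩, hmA, hmn⟩
  refine ⟨hxA, ?_⟩
  show T (m * n) x ∈ A
  rw [mul_comm, hTmul]
  exact hmn
end
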